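/- arXiv:2409.09193 — 7 statements merged into one kernel-verified Lean document; each statement's English description precedes it below -/
import Mathlib

section
/- Let κ ∈ 𝐊 and σ̌ > 0. Then R₀ < ∞ and R₁ < ∞ with R₁ > 0; the function φ is nonincreasing on [0,∞) with 0 < φ(r) ≤ 1 for all r ≥ 0; and 0 < 𝒵 < ∞. Consequently f_{κ,σ̌}, λ_{κ,σ̌} and C_{κ,σ̌} are well defined, with λ_{κ,σ̌} > 0 and 0 < C_{κ,σ̌} ≤ 1/2. -/
open Real MeasureTheory Set Filter

noncomputable section

/-- The class `𝐊` of monotonicity profiles: continuous on `(0,∞)`,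
`∫₀¹ r (κ r)⁻ dr < ∞` and `liminf_{r→∞} κ(r) > 0`. -/
def memK (κ : ℝ → ℝ) : Prop :=
  ContinuousOn κ (Set.Ioi 0) ∧
  MeasureTheory.IntegrableOn (fun r => r * max (-κ r) 0) (Set.Ioc 0 1) ∧
  ∃ ε > 0, ∀ᶠ r in Filter.atTop, ε ≤ κ r

/-- The set defining `R₀ = inf {R ≥ 0 : κ(r) ≥ 0 for all r ≥ R}`. -/
def R0set (κ : ℝ → ℝ) : Set ℝ := {R | 0 ≤ R ∧ ∀ r, 0 < r → R ≤ r → 0 ≤ κ r}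

def R0 (κ : ℝ → ℝ) : ℝ := sInf (R0set κ)

/-- The set defining `R₁ = inf {R ≥ R₀ : R(R−R₀)·inf_{r ≥ R} κ(r) ≥ 4σ̌²}`. -/
def R1set (κ : ℝ → ℝ) (σ : ℝ) : Set ℝ :=
  {R | R0 κ ≤ R ∧ ∀ r, 0 < r → R ≤ r → 4 * σ ^ 2 ≤ R * (R - R0 κ) * κ r}

def R1 (κ : ℝ → ℝ) (σ : ℝ) : ℝ := sInf (R1set κ σ)

/-- `φ(r) = exp(−(1/(2σ̌²)) ∫₀ʳ s (κ s)⁻ ds)`. -/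
def phiF (κ : ℝ → ℝ) (σ : ℝ) (r : ℝ) : ℝ :=
  Real.exp (-(1 / (2 * σ ^ 2)) * ∫ s in (0:ℝ)..r, s * max (-κ s) 0)

/-- `Φ(r) = ∫₀ʳ φ(s) ds`. -/
def PhiF (κ : ℝ → ℝ) (σ : ℝ) (r : ℝ) : ℝ := ∫ s in (0:ℝ)..r, phiF κ σ s

/-- `𝒵 = ∫₀^{R₁} Φ(s)/φ(s) ds`. -/
def Zconst (κ : ℝ → ℝ) (σ : ℝ) : ℝ :=
  ∫ s in (0:ℝ)..(R1 κ σ), PhiF κ σ s / phiF κ σ s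

/-- `g(r) = 1 − (∫₀^{min(r,R₁)} Φ(s)/φ(s) ds)/(2𝒵)`. -/
def gF (κ : ℝ → ℝ) (σ : ℝ) (r : ℝ) : ℝ :=
  1 - (∫ s in (0:ℝ)..(min r (R1 κ σ)), PhiF κ σ s / phiF κ σ s) / (2 * Zconst κ σ)

/-- `f_{κ,σ̌}(r) = ∫₀ʳ φ(s) g(s) ds`. -/
def fF (κ : ℝ → ℝ) (σ : ℝ) (r : ℝ) : ℝ := ∫ s in (0:ℝ)..r, phiF κ σ s * gF κ σ s

/-- `λ_{κ,σ̌} = σ̌²/𝒵`. -/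
def lamConst (κ : ℝ → ℝ) (σ : ℝ) : ℝ := σ ^ 2 / Zconst κ σ

/-- `C_{κ,σ̌} = φ(R₀)/2`. -/
def CConst (κ : ℝ → ℝ) (σ : ℝ) : ℝ := phiF κ σ (R0 κ) / 2

section Aux

variable {κ : ℝ → ℝ} {σ : ℝ}

lemma aux_hcont (hκ : memK κ) : ContinuousOn (fun s => s * max (-κ s) 0) (Set.Ioi 0) :=
  continuousOn_id.mul ((hκ.1.neg).sup continuousOn_const)

lemma aux_hIntOn (hκ : memK κ) (b : ℝ) :
    IntegrableOn (fun s => s * max (-κ s) 0) (Icc 0 b) volume := by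
  rw [integrableOn_Icc_iff_integrableOn_Ioc]
  rcases le_or_gt b 1 with hb | hb
  · exact hκ.2.1.mono_set (Ioc_subset_Ioc le_rfl hb)
  · rw [← Set.Ioc_union_Ioc_eq_Ioc zero_le_one hb.le]
    refine hκ.2.1.union ?_
    have : IntegrableOn (fun s => s * max (-κ s) 0) (Icc 1 b) volume :=
      ((aux_hcont hκ).mono (fun x hx => lt_of_lt_of_le zero_lt_one hx.1)).integrableOn_Icc
    exact this.mono_set Ioc_subset_Icc_self

lemma aux_hII (hκ : memK κ) {a b : ℝ} (ha : 0 ≤ a) (hb : 0 ≤ b) :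
    IntervalIntegrable (fun s => s * max (-κ s) 0) volume a b := by
  refine ((aux_hIntOn hκ (max a b)).mono_set ?_).intervalIntegrable
  exact Set.uIcc_subset_Icc ⟨ha, le_max_left a b⟩ ⟨hb, le_max_right a b⟩

lemma aux_Inonneg {a b : ℝ} (ha : 0 ≤ a) (hab : a ≤ b) :
    0 ≤ ∫ s in a..b, s * max (-κ s) 0 :=
  intervalIntegral.integral_nonneg hab
    (fun u hu => mul_nonneg (ha.trans hu.1) (le_max_right _ _))

lemma aux_phi_pos (r : ℝ) : 0 < phiF κ σ r := Real.exp_pos _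

lemma aux_phi_le_one (hσ : 0 < σ) {r : ℝ} (hr : 0 ≤ r) : phiF κ σ r ≤ 1 := by
  unfold phiF
  rw [Real.exp_le_one_iff, neg_mul, neg_nonpos]
  exact mul_nonneg (by positivity) (aux_Inonneg le_rfl hr)

lemma aux_phi_anti (hκ : memK κ) (hσ : 0 < σ) : AntitoneOn (phiF κ σ) (Set.Ici 0) := by
  intro a ha b hb hab
  simp only [mem_Ici] at ha hb
  unfold phiF
  apply Real.exp_le_exp.2
  have key : (∫ s in (0:ℝ)..a, s * max (-κ s) 0) ≤ ∫ s in (0:ℝ)..b, s * max (-κ s) 0 := by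
    rw [← intervalIntegral.integral_add_adjacent_intervals (aux_hII hκ le_rfl ha)
      (aux_hII hκ ha hb)]
    have := aux_Inonneg (κ := κ) ha hab
    linarith
  rw [neg_mul, neg_mul, neg_le_neg_iff]
  exact mul_le_mul_of_nonneg_left key (by positivity)

lemma aux_phicont (hκ : memK κ) {b : ℝ} (hb : 0 ≤ b) :
    ContinuousOn (phiF κ σ) (Icc 0 b) := by
  have hI : ContinuousOn (fun x => ∫ s in (0:ℝ)..x, s * max (-κ s) 0) (Icc 0 b) := by
    have := intervalIntegral.continuousOn_primitive_interval
      (f := fun s => s * max (-κ s) 0) (μ := volume) (a := (0:ℝ)) (b := b)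
      (by rw [uIcc_of_le hb]; exact aux_hIntOn hκ b)
    rwa [uIcc_of_le hb] at this
  exact Real.continuous_exp.comp_continuousOn (continuousOn_const.mul hI)

lemma aux_Phicont (hκ : memK κ) {b : ℝ} (hb : 0 ≤ b) :
    ContinuousOn (PhiF κ σ) (Icc 0 b) := by
  have := intervalIntegral.continuousOn_primitive_interval
    (f := phiF κ σ) (μ := volume) (a := (0:ℝ)) (b := b)
    (by rw [uIcc_of_le hb]; exact (aux_phicont hκ hb).integrableOn_Icc)
  rwa [uIcc_of_le hb] at this

lemma aux_Phi_pos (hκ : memK κ) {s : ℝ} (hs : 0 < s) : 0 < PhiF κ σ s := by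
  refine intervalIntegral.intervalIntegral_pos_of_pos ?_ (fun x => aux_phi_pos x) hs
  have h : IntegrableOn (phiF κ σ) (Icc 0 s) volume := (aux_phicont hκ hs.le).integrableOn_Icc
  exact (h.mono_set (uIcc_of_le hs.le).subset).intervalIntegrable

end Aux

/-- well-definedness and basic properties of `R₀, R₁, φ, 𝒵, f, λ, C`. -/
theorem stmt0 (κ : ℝ → ℝ) (σ : ℝ) (hκ : memK κ) (hσ : 0 < σ) :
    (R0set κ).Nonempty ∧
    (R1set κ σ).Nonempty ∧
    0 < R1 κ σ ∧
    AntitoneOn (phiF κ σ) (Set.Ici 0) ∧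
    (∀ r, 0 ≤ r → 0 < phiF κ σ r ∧ phiF κ σ r ≤ 1) ∧
    IntervalIntegrable (fun s => PhiF κ σ s / phiF κ σ s) MeasureTheory.volume 0 (R1 κ σ) ∧
    0 < Zconst κ σ ∧
    0 < lamConst κ σ ∧
    0 < CConst κ σ ∧ CConst κ σ ≤ 1 / 2 := by
  obtain ⟨ε, hε, hev⟩ := hκ.2.2
  obtain ⟨M, hM⟩ := Filter.eventually_atTop.mp hev
  -- R0set nonempty
  have hR0ne : (R0set κ).Nonempty :=
    ⟨max M 0, le_max_right _ _, fun r _ hMr => hε.le.trans (hM r ((le_max_left M 0).trans hMr))⟩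
  have hR0nn : 0 ≤ R0 κ := le_csInf hR0ne (fun x hx => hx.1)
  -- R1set nonempty
  have hR1ne : (R1set κ σ).Nonempty := by
    set c : ℝ := 4 * σ ^ 2 / ε with hc_def
    have hc : 0 ≤ c := by positivity
    have hcε : c * ε = 4 * σ ^ 2 := div_mul_cancel₀ _ hε.ne'
    refine ⟨max M (R0 κ) + 1 + c, ?_, ?_⟩
    · have := le_max_right M (R0 κ); linarith
    · intro r hr0 hRr
      have hmx : (0:ℝ) ≤ max M (R0 κ) := hR0nn.trans (le_max_right M (R0 κ))
      have hκr : ε ≤ κ r := hM r (by have := le_max_left M (R0 κ); linarith)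
      have h1 : c ≤ (max M (R0 κ) + 1 + c) * ((max M (R0 κ) + 1 + c) - R0 κ) := by
        have h2 : R0 κ ≤ max M (R0 κ) := le_max_right M (R0 κ)
        nlinarith
      calc 4 * σ ^ 2 = c * ε := hcε.symm
        _ ≤ (max M (R0 κ) + 1 + c) * ((max M (R0 κ) + 1 + c) - R0 κ) * κ r :=
          mul_le_mul h1 hκr hε.le (hc.trans h1)
  -- R1 positive
  have hR1pos : 0 < R1 κ σ := by
    set K : ℝ := max (κ 1) 1 with hK_def
    have hK : (0:ℝ) < K := lt_of_lt_of_le zero_lt_one (le_max_right _ _)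
    have hlb : ∀ x ∈ R1set κ σ, min 1 (4 * σ ^ 2 / K) ≤ x := by
      rintro x ⟨hx0, hx⟩
      rcases le_or_gt 1 x with h1 | h1
      · exact (min_le_left _ _).trans h1
      · have h2 := hx 1 zero_lt_one h1.le
        have hx0' : 0 ≤ x := hR0nn.trans hx0
        have hxR0 : 0 ≤ x - R0 κ := by linarith
        have hκ1 : κ 1 ≤ K := le_max_left _ _
        have hκ1pos : 0 ≤ κ 1 := by
          by_contra h
          push_neg at h
          have h3 := mul_nonpos_of_nonneg_of_nonpos (mul_nonneg hx0' hxR0) h.le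
          have h4 : 0 < 4 * σ ^ 2 := by positivity
          linarith
        have h5 : x * (x - R0 κ) ≤ x := by nlinarith
        have h6 : x * (x - R0 κ) * κ 1 ≤ x * κ 1 :=
          mul_le_mul_of_nonneg_right h5 hκ1pos
        have h7 : x * κ 1 ≤ x * K := mul_le_mul_of_nonneg_left hκ1 hx0'
        have hxK : 4 * σ ^ 2 ≤ x * K := by linarith
        refine (min_le_right _ _).trans ?_
        rw [div_le_iff₀ hK]
        linarith
    have : min 1 (4 * σ ^ 2 / K) ≤ R1 κ σ := le_csInf hR1ne hlb
    have hm : 0 < min 1 (4 * σ ^ 2 / K) := lt_min zero_lt_one (by positivity)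
    linarith
  -- interval integrability of Φ/φ
  have hII : IntervalIntegrable (fun s => PhiF κ σ s / phiF κ σ s)
      MeasureTheory.volume 0 (R1 κ σ) := by
    have hcont : ContinuousOn (fun s => PhiF κ σ s / phiF κ σ s) (Icc 0 (R1 κ σ)) :=
      (aux_Phicont hκ hR1pos.le).div (aux_phicont hκ hR1pos.le)
        (fun x _ => (aux_phi_pos x).ne')
    have h : IntegrableOn (fun s => PhiF κ σ s / phiF κ σ s) (Icc 0 (R1 κ σ)) volume :=
      hcont.integrableOn_Icc
    exact (h.mono_set (uIcc_of_le hR1pos.le).subset).intervalIntegrable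
  -- Z positive
  have hZ : 0 < Zconst κ σ := by
    refine intervalIntegral.intervalIntegral_pos_of_pos_on hII ?_ hR1pos
    intro x hx
    exact div_pos (aux_Phi_pos hκ hx.1) (aux_phi_pos x)
  refine ⟨hR0ne, hR1ne, hR1pos, aux_phi_anti hκ hσ,
    fun r hr => ⟨aux_phi_pos r, aux_phi_le_one hσ hr⟩, hII, hZ, ?_, ?_, ?_⟩
  · exact div_pos (by positivity) hZ
  · exact half_pos (aux_phi_pos _)
  · have := aux_phi_le_one (κ := κ) hσ hR0nn
    unfold CConst; linarith
end
end

section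
/- Let κ ∈ 𝐊 and σ̌ > 0. Then f_{κ,σ̌} is equivalent to the identity on [0,∞): for every r ≥ 0 one has C_{κ,σ̌}·r ≤ f_{κ,σ̌}(r) ≤ r and C_{κ,σ̌} ≤ f'_{κ,σ̌}(r) ≤ 1, where C_{κ,σ̌} = φ(R₀)/2 and f'_{κ,σ̌}(r) = φ(r)g(r). -/
open Real MeasureTheory Set Filter

noncomputable section

/-! φ is nonincreasing on `[0, ∞)` and constant from `R₀` on, so `φ(R₀) ≤ φ ≤ 1` there. The
integrand `Φ/φ` of `g` is nonnegative, so its integral up to `min(r, R₁)` lies in `[0, 𝒵]` and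
`1/2 ≤ g ≤ 1` (also when `𝒵 = 0`, where Lean's division makes `g ≡ 1`). Thus `C ≤ φ g ≤ 1` on
`[0, ∞)`, and integrating gives the bounds on `f`. -/

theorem monotoneOn_integral_of_nonneg {h : ℝ → ℝ} (h_nonneg : ∀ x, 0 ≤ x → 0 ≤ h x)
    (h_int : ∀ b, 0 ≤ b → IntervalIntegrable h volume 0 b) :
    MonotoneOn (fun r => ∫ x in (0:ℝ)..r, h x) (Ici 0) := by
  intro a ha b _ hab
  refine intervalIntegral.integral_mono_interval le_rfl ha hab ?_ (h_int b (ha.trans hab))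
  exact (ae_restrict_iff' measurableSet_Ioc).2 (Eventually.of_forall fun x hx => h_nonneg x hx.1.le)

theorem sub_mul_le_integral_of_le {u : ℝ → ℝ} {a b c : ℝ} (hab : a ≤ b)
    (hu : IntervalIntegrable u volume a b) (h : ∀ x ∈ Icc a b, c ≤ u x) :
    (b - a) * c ≤ ∫ x in a..b, u x := by
  simpa using intervalIntegral.integral_mono_on hab intervalIntegrable_const hu h

theorem integral_le_sub_mul_of_le {u : ℝ → ℝ} {a b c : ℝ} (hab : a ≤ b)
    (hu : IntervalIntegrable u volume a b) (h : ∀ x ∈ Icc a b, u x ≤ c) :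
    ∫ x in a..b, u x ≤ (b - a) * c := by
  simpa using intervalIntegral.integral_mono_on hab hu intervalIntegrable_const h

theorem one_sub_div_two_mul_mem_Icc {x z : ℝ} (hx : 0 ≤ x) (hxz : x ≤ z) :
    1 - x / (2 * z) ∈ Icc (1 / 2) 1 := by
  rcases (hx.trans hxz).eq_or_lt with rfl | hz
  · norm_num [le_antisymm hxz hx]
  have hle : x / (2 * z) ≤ 1 / 2 := by
    rw [div_le_iff₀ (by positivity)]
    linarith
  have hnonneg : 0 ≤ x / (2 * z) := by positivity
  constructor <;> linarith

theorem MonotoneOn.intervalIntegrable_of_Ici {u : ℝ → ℝ} {a b : ℝ} (hu : MonotoneOn u (Ici a))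
    (hab : a ≤ b) : IntervalIntegrable u volume a b :=
  (hu.mono (by rw [uIcc_of_le hab]; exact Icc_subset_Ici_self)).intervalIntegrable

theorem AntitoneOn.intervalIntegrable_of_Ici {u : ℝ → ℝ} {a b : ℝ} (hu : AntitoneOn u (Ici a))
    (hab : a ≤ b) : IntervalIntegrable u volume a b :=
  (hu.mono (by rw [uIcc_of_le hab]; exact Icc_subset_Ici_self)).intervalIntegrable

theorem R0_nonneg (κ : ℝ → ℝ) : 0 ≤ R0 κ := Real.sInf_nonneg fun _ hR => hR.1

theorem R1_nonneg (κ : ℝ → ℝ) (σ : ℝ) : 0 ≤ R1 κ σ :=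
  Real.sInf_nonneg fun _ hR => (R0_nonneg κ).trans hR.1

theorem phiF_pos (κ : ℝ → ℝ) (σ r : ℝ) : 0 < phiF κ σ r := exp_pos _

theorem phiF_le_one (κ : ℝ → ℝ) (σ : ℝ) {r : ℝ} (hr : 0 ≤ r) : phiF κ σ r ≤ 1 := by
  refine exp_le_one_iff.2 (mul_nonpos_of_nonpos_of_nonneg (neg_nonpos.2 (by positivity)) ?_)
  exact intervalIntegral.integral_nonneg hr fun s hs => mul_nonneg hs.1 (le_max_right _ _)

theorem PhiF_nonneg (κ : ℝ → ℝ) (σ : ℝ) {r : ℝ} (hr : 0 ≤ r) : 0 ≤ PhiF κ σ r :=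
  intervalIntegral.integral_nonneg hr fun s _ => (phiF_pos κ σ s).le

theorem integral_PhiF_div_phiF_nonneg (κ : ℝ → ℝ) (σ : ℝ) {t : ℝ} (ht : 0 ≤ t) :
    0 ≤ ∫ s in (0:ℝ)..t, PhiF κ σ s / phiF κ σ s :=
  intervalIntegral.integral_nonneg ht fun s hs =>
    div_nonneg (PhiF_nonneg κ σ hs.1) (phiF_pos κ σ s).le

theorem Zconst_nonneg (κ : ℝ → ℝ) (σ : ℝ) : 0 ≤ Zconst κ σ :=
  integral_PhiF_div_phiF_nonneg κ σ (R1_nonneg κ σ)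

namespace memK

variable {κ : ℝ → ℝ} (hκ : memK κ)
include hκ

theorem integrableOn_mul_negPart_Ioc (b : ℝ) :
    IntegrableOn (fun s => s * max (-κ s) 0) (Ioc 0 b) := by
  rcases le_or_gt b 1 with hb | hb
  · exact hκ.2.1.mono_set (Ioc_subset_Ioc_right hb)
  have hcont : ContinuousOn (fun s => s * max (-κ s) 0) (Icc 1 b) :=
    continuousOn_id.mul ((hκ.1.mono fun x hx => one_pos.trans_le hx.1).neg.sup continuousOn_const)
  rw [← Ioc_union_Ioc_eq_Ioc zero_le_one hb.le]
  exact hκ.2.1.union (hcont.integrableOn_Icc.mono_set Ioc_subset_Icc_self)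

theorem nonneg_of_R0_lt {s : ℝ} (hs : R0 κ < s) : 0 ≤ κ s := by
  obtain ⟨ε, hε, hev⟩ := hκ.2.2
  obtain ⟨M, hM⟩ := eventually_atTop.1 hev
  have hne : (R0set κ).Nonempty :=
    ⟨max M 0, le_max_right _ _, fun r _ hr => hε.le.trans (hM r ((le_max_left M 0).trans hr))⟩
  obtain ⟨R, hR, hRs⟩ := (csInf_lt_iff ⟨0, fun x hx => hx.1⟩ hne).1 hs
  exact hR.2 s (hR.1.trans_lt hRs) hRs.le

theorem intervalIntegrable_mul_negPart {b : ℝ} (hb : 0 ≤ b) :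
    IntervalIntegrable (fun s => s * max (-κ s) 0) volume 0 b :=
  (intervalIntegrable_iff_integrableOn_Ioc_of_le hb).2 (hκ.integrableOn_mul_negPart_Ioc b)

theorem phiF_antitoneOn (σ : ℝ) : AntitoneOn (phiF κ σ) (Ici 0) := by
  intro a ha b hb hab
  have hmono := monotoneOn_integral_of_nonneg (fun x hx => mul_nonneg hx (le_max_right _ _))
    (fun _ hb => hκ.intervalIntegrable_mul_negPart hb) ha hb hab
  exact exp_le_exp.2 (mul_le_mul_of_nonpos_left hmono (neg_nonpos.2 (by positivity)))

theorem phiF_eq_of_R0_le (σ : ℝ) {r : ℝ} (hr : R0 κ ≤ r) : phiF κ σ r = phiF κ σ (R0 κ) := by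
  have hR0 := R0_nonneg κ
  have htail : ∫ s in (R0 κ)..r, s * max (-κ s) 0 = 0 := by
    refine intervalIntegral.integral_zero_ae (Eventually.of_forall fun s hs => ?_)
    rw [uIoc_of_le hr] at hs
    simp [hκ.nonneg_of_R0_lt hs.1]
  have hhead := hκ.intervalIntegrable_mul_negPart hR0
  have hsplit := intervalIntegral.integral_add_adjacent_intervals hhead
    (hhead.symm.trans (hκ.intervalIntegrable_mul_negPart (hR0.trans hr)))
  rw [phiF, phiF, ← hsplit, htail, add_zero]

theorem phiF_R0_le (σ : ℝ) {r : ℝ} (hr : 0 ≤ r) : phiF κ σ (R0 κ) ≤ phiF κ σ r := by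
  rcases le_total r (R0 κ) with h | h
  · exact hκ.phiF_antitoneOn σ hr (R0_nonneg κ) h
  · exact (hκ.phiF_eq_of_R0_le σ h).ge

theorem monotoneOn_PhiF (σ : ℝ) : MonotoneOn (PhiF κ σ) (Ici 0) :=
  monotoneOn_integral_of_nonneg (fun x _ => (phiF_pos κ σ x).le)
    fun _ hb => (hκ.phiF_antitoneOn σ).intervalIntegrable_of_Ici hb

theorem monotoneOn_integral_PhiF_div_phiF (σ : ℝ) :
    MonotoneOn (fun t => ∫ s in (0:ℝ)..t, PhiF κ σ s / phiF κ σ s) (Ici 0) := by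
  have hmono : MonotoneOn (fun s => PhiF κ σ s / phiF κ σ s) (Ici 0) := fun a ha b hb hab =>
    div_le_div₀ (PhiF_nonneg κ σ hb) (hκ.monotoneOn_PhiF σ ha hb hab) (phiF_pos κ σ b)
      (hκ.phiF_antitoneOn σ ha hb hab)
  exact monotoneOn_integral_of_nonneg
    (fun x hx => div_nonneg (PhiF_nonneg κ σ hx) (phiF_pos κ σ x).le)
    fun _ hb => hmono.intervalIntegrable_of_Ici hb

theorem gF_mem_Icc (σ : ℝ) {r : ℝ} (hr : 0 ≤ r) : gF κ σ r ∈ Icc (1 / 2) 1 := by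
  have ht : 0 ≤ min r (R1 κ σ) := le_min hr (R1_nonneg κ σ)
  exact one_sub_div_two_mul_mem_Icc (integral_PhiF_div_phiF_nonneg κ σ ht)
    (hκ.monotoneOn_integral_PhiF_div_phiF σ ht (R1_nonneg κ σ) (min_le_right _ _))

theorem gF_antitoneOn (σ : ℝ) : AntitoneOn (gF κ σ) (Ici 0) := by
  intro a ha b hb hab
  have ha' : 0 ≤ min a (R1 κ σ) := le_min ha (R1_nonneg κ σ)
  have hb' : 0 ≤ min b (R1 κ σ) := le_min hb (R1_nonneg κ σ)
  exact sub_le_sub_left (div_le_div_of_nonneg_right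
    (hκ.monotoneOn_integral_PhiF_div_phiF σ ha' hb' (min_le_min_right _ hab))
    (by linarith [Zconst_nonneg κ σ])) 1

theorem CConst_le_phiF_mul_gF (σ : ℝ) {r : ℝ} (hr : 0 ≤ r) :
    CConst κ σ ≤ phiF κ σ r * gF κ σ r :=
  calc CConst κ σ = phiF κ σ (R0 κ) * (1 / 2) := by rw [CConst]; ring
    _ ≤ phiF κ σ r * gF κ σ r :=
      mul_le_mul (hκ.phiF_R0_le σ hr) (hκ.gF_mem_Icc σ hr).1 (by norm_num) (phiF_pos κ σ r).le

theorem phiF_mul_gF_le_one (σ : ℝ) {r : ℝ} (hr : 0 ≤ r) : phiF κ σ r * gF κ σ r ≤ 1 :=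
  have hg := hκ.gF_mem_Icc σ hr
  mul_le_one₀ (phiF_le_one κ σ hr) (by linarith [hg.1]) hg.2

theorem intervalIntegrable_phiF_mul_gF (σ : ℝ) {r : ℝ} (hr : 0 ≤ r) :
    IntervalIntegrable (fun s => phiF κ σ s * gF κ σ s) volume 0 r := by
  refine AntitoneOn.intervalIntegrable_of_Ici (fun a ha b hb hab => ?_) hr
  exact mul_le_mul (hκ.phiF_antitoneOn σ ha hb hab) (hκ.gF_antitoneOn σ ha hb hab)
    (by linarith [(hκ.gF_mem_Icc σ hb).1]) (phiF_pos κ σ a).le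

end memK

theorem stmt2_general (κ : ℝ → ℝ) (σ : ℝ) (hκ : memK κ) :
    ∀ r, 0 ≤ r →
      CConst κ σ * r ≤ fF κ σ r ∧ fF κ σ r ≤ r ∧
      CConst κ σ ≤ phiF κ σ r * gF κ σ r ∧ phiF κ σ r * gF κ σ r ≤ 1 := by
  intro r hr
  have hint := hκ.intervalIntegrable_phiF_mul_gF σ hr
  refine ⟨?_, ?_, hκ.CConst_le_phiF_mul_gF σ hr, hκ.phiF_mul_gF_le_one σ hr⟩
  · simpa [fF, mul_comm (CConst κ σ)] using
      sub_mul_le_integral_of_le hr hint fun x hx => hκ.CConst_le_phiF_mul_gF σ hx.1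
  · simpa [fF] using integral_le_sub_mul_of_le hr hint fun x hx => hκ.phiF_mul_gF_le_one σ hx.1

/-- `f_{κ,σ̌}` is equivalent to the identity on `[0,∞)`:
`C_{κ,σ̌}·r ≤ f(r) ≤ r` and `C_{κ,σ̌} ≤ f'(r) = φ(r)g(r) ≤ 1`. -/
theorem stmt2 (κ : ℝ → ℝ) (σ : ℝ) (hκ : memK κ) (hσ : 0 < σ) :
    ∀ r, 0 ≤ r →
      CConst κ σ * r ≤ fF κ σ r ∧ fF κ σ r ≤ r ∧
      CConst κ σ ≤ phiF κ σ r * gF κ σ r ∧ phiF κ σ r * gF κ σ r ≤ 1 :=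
  stmt2_general κ σ hκ
end
end

section
/- Let σ̌ > 0 and let κ, κ' ∈ 𝐊 be such that κ(r) ≥ κ'(r) for all r > 0. Then λ_{κ,σ̌} ≥ λ_{κ',σ̌} and C_{κ,σ̌} ≥ C_{κ',σ̌}. -/
open Real MeasureTheory Set Filter

noncomputable section

namespace Stmt4Aux

/-- kernel integrand -/
def G (κ : ℝ → ℝ) (s : ℝ) : ℝ := s * max (-κ s) 0

lemma G_nonneg (κ : ℝ → ℝ) {s : ℝ} (hs : 0 ≤ s) : 0 ≤ G κ s :=
  mul_nonneg hs (le_max_right _ _)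

lemma G_cont {κ : ℝ → ℝ} (hκ : ContinuousOn κ (Set.Ioi 0)) :
    ContinuousOn (G κ) (Set.Ioi 0) :=
  (continuous_id.continuousOn).mul (hκ.neg.sup continuousOn_const)

lemma G_integrableOn {κ : ℝ → ℝ} (hκ : memK κ) (R : ℝ) :
    IntegrableOn (G κ) (Set.Ioc 0 R) := by
  rcases le_or_gt R 1 with h | h
  · exact (hκ.2.1).mono_set (Set.Ioc_subset_Ioc_right h)
  · have h2 : IntegrableOn (G κ) (Set.Ioc 1 R) := by
      have hc : ContinuousOn (G κ) (Set.Icc 1 R) :=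
        (G_cont hκ.1).mono (fun x hx => lt_of_lt_of_le one_pos hx.1)
      exact (hc.integrableOn_Icc).mono_set Set.Ioc_subset_Icc_self
    have he : Set.Ioc 0 R = Set.Ioc 0 1 ∪ Set.Ioc 1 R :=
      (Set.Ioc_union_Ioc_eq_Ioc (by norm_num) h.le).symm
    rw [he]
    exact (hκ.2.1).union h2

lemma G_intInt {κ : ℝ → ℝ} (hκ : memK κ) {a b : ℝ} (ha : 0 ≤ a) (hb : 0 ≤ b) :
    IntervalIntegrable (G κ) volume a b := by
  rw [intervalIntegrable_iff]
  exact (G_integrableOn hκ (max a b)).mono_set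
    (Set.Ioc_subset_Ioc (le_min ha hb) le_rfl)

/-- primitive of the kernel -/
def F (κ : ℝ → ℝ) (r : ℝ) : ℝ := ∫ s in (0:ℝ)..r, G κ s

lemma phiF_eq (κ : ℝ → ℝ) (σ r : ℝ) :
    phiF κ σ r = Real.exp (-(1 / (2 * σ ^ 2)) * F κ r) := rfl

lemma F_sub {κ : ℝ → ℝ} (hκ : memK κ) {a b : ℝ} (ha : 0 ≤ a) (hb : 0 ≤ b) :
    F κ b - F κ a = ∫ s in a..b, G κ s := by
  have := intervalIntegral.integral_add_adjacent_intervals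
    (G_intInt hκ le_rfl ha) (G_intInt hκ ha hb)
  unfold F; linarith

lemma F_mono {κ : ℝ → ℝ} (hκ : memK κ) {a b : ℝ} (ha : 0 ≤ a) (hab : a ≤ b) :
    F κ a ≤ F κ b := by
  have h := F_sub hκ ha (ha.trans hab)
  have h2 : 0 ≤ ∫ s in a..b, G κ s :=
    intervalIntegral.integral_nonneg hab (fun u hu => G_nonneg κ (ha.trans hu.1))
  linarith

lemma F_diff_le {κ κ' : ℝ → ℝ} (hκ : memK κ) (hκ' : memK κ')
    (hle : ∀ r, 0 < r → κ' r ≤ κ r) {a b : ℝ} (ha : 0 ≤ a) (hab : a ≤ b) :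
    F κ b - F κ a ≤ F κ' b - F κ' a := by
  rw [F_sub hκ ha (ha.trans hab), F_sub hκ' ha (ha.trans hab)]
  refine intervalIntegral.integral_mono_on hab (G_intInt hκ ha (ha.trans hab))
    (G_intInt hκ' ha (ha.trans hab)) (fun x hx => ?_)
  rcases eq_or_lt_of_le (ha.trans hx.1) with h0 | h0
  · simp [G, ← h0]
  · exact mul_le_mul_of_nonneg_left
      (max_le_max (neg_le_neg (hle x h0)) le_rfl) (le_of_lt h0)

lemma F_zero (κ : ℝ → ℝ) : F κ 0 = 0 := intervalIntegral.integral_same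

lemma F_le {κ κ' : ℝ → ℝ} (hκ : memK κ) (hκ' : memK κ')
    (hle : ∀ r, 0 < r → κ' r ≤ κ r) {r : ℝ} (hr : 0 ≤ r) :
    F κ r ≤ F κ' r := by
  have := F_diff_le hκ hκ' hle le_rfl hr
  rw [F_zero, F_zero] at this; linarith

lemma F_contOn {κ : ℝ → ℝ} (hκ : memK κ) (R : ℝ) :
    ContinuousOn (F κ) (Set.Icc 0 R) := by
  rcases le_or_gt R 0 with h | h
  · rcases eq_or_lt_of_le h with h' | h'
    · subst h'
      simp only [Set.Icc_self]
      exact continuousOn_singleton _ _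
    · rw [Set.Icc_eq_empty (by linarith)]
      exact continuousOn_empty _
  · have hint : IntegrableOn (G κ) (Set.uIcc 0 R) := by
      rw [Set.uIcc_of_le h.le, integrableOn_Icc_iff_integrableOn_Ioc]
      exact G_integrableOn hκ R
    have := intervalIntegral.continuousOn_primitive_interval (a := 0) (b := R)
      (μ := volume) (f := G κ) hint
    rw [Set.uIcc_of_le h.le] at this
    exact this

lemma phiF_pos (κ : ℝ → ℝ) (σ r : ℝ) : 0 < phiF κ σ r := Real.exp_pos _

lemma phiF_contOn {κ : ℝ → ℝ} (hκ : memK κ) (σ R : ℝ) :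
    ContinuousOn (phiF κ σ) (Set.Icc 0 R) := by
  have : phiF κ σ = fun r => Real.exp (-(1 / (2 * σ ^ 2)) * F κ r) := rfl
  rw [this]
  exact Real.continuous_exp.comp_continuousOn
    ((continuousOn_const).mul (F_contOn hκ R))

lemma phiF_antitone {κ : ℝ → ℝ} (hκ : memK κ) {σ : ℝ} (hσ : 0 < σ)
    {a b : ℝ} (ha : 0 ≤ a) (hab : a ≤ b) : phiF κ σ b ≤ phiF κ σ a := by
  rw [phiF_eq, phiF_eq]
  apply Real.exp_le_exp.2
  have hc : (0:ℝ) < 1 / (2 * σ ^ 2) := by positivity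
  have := F_mono hκ ha hab
  nlinarith

lemma phiF_le {κ κ' : ℝ → ℝ} (hκ : memK κ) (hκ' : memK κ')
    (hle : ∀ r, 0 < r → κ' r ≤ κ r) {σ : ℝ} (hσ : 0 < σ) {r : ℝ} (hr : 0 ≤ r) :
    phiF κ' σ r ≤ phiF κ σ r := by
  rw [phiF_eq, phiF_eq]
  apply Real.exp_le_exp.2
  have hc : (0:ℝ) < 1 / (2 * σ ^ 2) := by positivity
  have := F_le hκ hκ' hle hr
  nlinarith

lemma phiF_cross {κ κ' : ℝ → ℝ} (hκ : memK κ) (hκ' : memK κ')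
    (hle : ∀ r, 0 < r → κ' r ≤ κ r) {σ : ℝ} (hσ : 0 < σ)
    {t s : ℝ} (ht : 0 ≤ t) (hts : t ≤ s) :
    phiF κ σ t * phiF κ' σ s ≤ phiF κ' σ t * phiF κ σ s := by
  rw [phiF_eq, phiF_eq, phiF_eq, phiF_eq, ← Real.exp_add, ← Real.exp_add]
  apply Real.exp_le_exp.2
  have hc : (0:ℝ) < 1 / (2 * σ ^ 2) := by positivity
  have := F_diff_le hκ hκ' hle ht hts
  nlinarith

lemma PhiF_contOn {κ : ℝ → ℝ} (hκ : memK κ) (σ : ℝ) {R : ℝ} (hR : 0 ≤ R) :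
    ContinuousOn (PhiF κ σ) (Set.Icc 0 R) := by
  have hint : IntegrableOn (phiF κ σ) (Set.uIcc 0 R) := by
    rw [Set.uIcc_of_le hR]
    exact (phiF_contOn hκ σ R).integrableOn_Icc
  have := intervalIntegral.continuousOn_primitive_interval (a := 0) (b := R)
    (μ := volume) (f := phiF κ σ) hint
  rw [Set.uIcc_of_le hR] at this
  exact this

lemma phiF_intInt {κ : ℝ → ℝ} (hκ : memK κ) (σ : ℝ) {a b : ℝ}
    (ha : 0 ≤ a) (hb : 0 ≤ b) : IntervalIntegrable (phiF κ σ) volume a b := by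
  apply ContinuousOn.intervalIntegrable
  refine (phiF_contOn hκ σ (max a b)).mono ?_
  rw [Set.uIcc]
  exact Set.Icc_subset_Icc (le_inf ha hb) le_rfl

lemma PhiF_nonneg {κ : ℝ → ℝ} (σ : ℝ) {r : ℝ} (hr : 0 ≤ r) :
    0 ≤ PhiF κ σ r :=
  intervalIntegral.integral_nonneg hr (fun u _ => (phiF_pos κ σ u).le)

lemma PhiF_pos {κ : ℝ → ℝ} (hκ : memK κ) (σ : ℝ) {r : ℝ} (hr : 0 < r) :
    0 < PhiF κ σ r :=
  intervalIntegral.intervalIntegral_pos_of_pos_on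
    (phiF_intInt hκ σ le_rfl hr.le) (fun x _ => phiF_pos κ σ x) hr

/-- the integrand of `𝒵` -/
lemma hfun_le {κ κ' : ℝ → ℝ} (hκ : memK κ) (hκ' : memK κ')
    (hle : ∀ r, 0 < r → κ' r ≤ κ r) {σ : ℝ} (hσ : 0 < σ) {s : ℝ} (hs : 0 ≤ s) :
    PhiF κ σ s / phiF κ σ s ≤ PhiF κ' σ s / phiF κ' σ s := by
  rw [div_le_div_iff₀ (phiF_pos κ σ s) (phiF_pos κ' σ s)]
  have key : PhiF κ σ s * phiF κ' σ s ≤ PhiF κ' σ s * phiF κ σ s := by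
    have h1 : PhiF κ σ s * phiF κ' σ s = ∫ t in (0:ℝ)..s, phiF κ σ t * phiF κ' σ s := by
      rw [PhiF, ← intervalIntegral.integral_mul_const]
    have h2 : PhiF κ' σ s * phiF κ σ s = ∫ t in (0:ℝ)..s, phiF κ' σ t * phiF κ σ s := by
      rw [PhiF, ← intervalIntegral.integral_mul_const]
    rw [h1, h2]
    refine intervalIntegral.integral_mono_on hs
      ((phiF_intInt hκ σ le_rfl hs).mul_const _)
      ((phiF_intInt hκ' σ le_rfl hs).mul_const _)
      (fun t ht => phiF_cross hκ hκ' hle hσ ht.1 ht.2)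
  exact key

lemma hfun_contOn {κ : ℝ → ℝ} (hκ : memK κ) (σ : ℝ) {R : ℝ} (hR : 0 ≤ R) :
    ContinuousOn (fun s => PhiF κ σ s / phiF κ σ s) (Set.Icc 0 R) :=
  (PhiF_contOn hκ σ hR).div (phiF_contOn hκ σ R)
    (fun x _ => (phiF_pos κ σ x).ne')

lemma hfun_intInt {κ : ℝ → ℝ} (hκ : memK κ) (σ : ℝ) {a b : ℝ}
    (ha : 0 ≤ a) (hb : a ≤ b) :
    IntervalIntegrable (fun s => PhiF κ σ s / phiF κ σ s) volume a b := by
  apply ContinuousOn.intervalIntegrable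
  rw [Set.uIcc_of_le hb]
  exact (hfun_contOn hκ σ (ha.trans hb)).mono (Set.Icc_subset_Icc ha le_rfl)

/- ### R₀ and R₁ -/

lemma R0set_nonempty {κ : ℝ → ℝ} (hκ : memK κ) : (R0set κ).Nonempty := by
  obtain ⟨ε, hε, hev⟩ := hκ.2.2
  obtain ⟨M, hM⟩ := Filter.eventually_atTop.1 hev
  exact ⟨max M 0, le_max_right _ _, fun r _ hr =>
    le_trans hε.le (hM r (le_trans (le_max_left _ _) hr))⟩

lemma R0_nonneg (κ : ℝ → ℝ) : 0 ≤ R0 κ := by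
  rcases (R0set κ).eq_empty_or_nonempty with h | h
  · simp [R0, h, Real.sInf_empty]
  · exact Real.sInf_nonneg (fun x hx => hx.1)

lemma R0_le {κ κ' : ℝ → ℝ} (hκ : memK κ) (hκ' : memK κ')
    (hle : ∀ r, 0 < r → κ' r ≤ κ r) : R0 κ ≤ R0 κ' := by
  apply csInf_le_csInf ⟨0, fun x hx => hx.1⟩ (R0set_nonempty hκ')
  intro R hR
  exact ⟨hR.1, fun r hr hRr => le_trans (hR.2 r hr hRr) (hle r hr)⟩

lemma R0_mem {κ : ℝ → ℝ} (hκ : memK κ) : R0 κ ∈ R0set κ := by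
  have hR0eq : R0 κ = sInf (R0set κ) := rfl
  refine ⟨R0_nonneg κ, fun r hr hRr => ?_⟩
  have hpos : ∀ x, R0 κ < x → 0 < x → 0 ≤ κ x := by
    intro x hx hx0
    obtain ⟨R, hR, hRlt⟩ := Real.lt_sInf_add_pos (R0set_nonempty hκ)
      (sub_pos.2 hx)
    have hRx : R ≤ x := by rw [← hR0eq] at hRlt; linarith
    exact hR.2 x hx0 hRx
  rcases lt_or_eq_of_le hRr with h | h
  · exact hpos r h hr
  · have hcont : ContinuousWithinAt κ (Set.Ioi r) r :=
      ((hκ.1 r hr).mono (fun x (hx : x ∈ Set.Ioi r) => lt_trans hr hx))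
    refine ge_of_tendsto hcont ?_
    filter_upwards [self_mem_nhdsWithin] with x hx
    exact hpos x (h ▸ hx) (hr.trans hx)

lemma R1set_nonempty {κ : ℝ → ℝ} (hκ : memK κ) {σ : ℝ} (hσ : 0 < σ) :
    (R1set κ σ).Nonempty := by
  obtain ⟨ε, hε, hev⟩ := hκ.2.2
  obtain ⟨M, hM⟩ := Filter.eventually_atTop.1 hev
  set R : ℝ := max (max M (R0 κ + 1)) (4 * σ ^ 2 / ε) with hR
  have hR1 : R0 κ + 1 ≤ R := le_trans (le_max_right _ _) (le_max_left _ _)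
  refine ⟨R, by linarith, ?_⟩
  intro r hr hRr
  have hκr : ε ≤ κ r := hM r (le_trans (le_trans (le_max_left _ _)
    (le_max_left _ _)) hRr)
  have hR2 : 4 * σ ^ 2 / ε ≤ R := le_max_right _ _
  have hR0 : 0 ≤ R0 κ := R0_nonneg κ
  have h1 : 1 ≤ R - R0 κ := by linarith
  have h2 : 4 * σ ^ 2 ≤ R * ε := by
    rw [div_le_iff₀ hε] at hR2; linarith
  calc 4 * σ ^ 2 ≤ R * ε := h2
    _ ≤ R * ε * (R - R0 κ) := le_mul_of_one_le_right (by positivity) h1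
    _ = R * (R - R0 κ) * ε := by ring
    _ ≤ R * (R - R0 κ) * κ r := by
        apply mul_le_mul_of_nonneg_left hκr (by positivity)

lemma R1_mem_imp {κ : ℝ → ℝ} (hκ : memK κ) {σ : ℝ} (hσ : 0 < σ) {R : ℝ}
    (hR : R ∈ R1set κ σ) : min 1 (2 * σ / Real.sqrt (max (κ 1) (4 * σ ^ 2))) ≤ R := by
  rcases le_or_gt 1 R with h | h
  · exact le_trans (min_le_left _ _) h
  · refine le_trans (min_le_right _ _) ?_
    set C : ℝ := max (κ 1) (4 * σ ^ 2) with hC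
    have hCpos : 0 < C := lt_max_of_lt_right (by positivity)
    have hRnn : 0 ≤ R := le_trans (R0_nonneg κ) hR.1
    have hkey := hR.2 1 one_pos h.le
    have hR0 : 0 ≤ R0 κ := R0_nonneg κ
    have hprod : 0 ≤ R * (R - R0 κ) := mul_nonneg hRnn (sub_nonneg.2 hR.1)
    have hRR0 : R * (R - R0 κ) ≤ R ^ 2 := by nlinarith
    have hκ1pos : 0 < κ 1 := by nlinarith
    have hκ1C : κ 1 ≤ C := le_max_left _ _
    have h2 : 4 * σ ^ 2 ≤ R ^ 2 * C := by
      nlinarith [mul_le_mul_of_nonneg_right hRR0 hκ1pos.le,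
        mul_le_mul_of_nonneg_left hκ1C (sq_nonneg R)]
    have hs : Real.sqrt (4 * σ ^ 2) ≤ Real.sqrt (R ^ 2 * C) := Real.sqrt_le_sqrt h2
    rw [show (4:ℝ) * σ ^ 2 = (2 * σ) ^ 2 by ring, Real.sqrt_sq (by positivity),
      Real.sqrt_mul (sq_nonneg R), Real.sqrt_sq hRnn] at hs
    rw [div_le_iff₀ (Real.sqrt_pos.2 hCpos)]
    linarith [hs]

lemma R1_pos {κ : ℝ → ℝ} (hκ : memK κ) {σ : ℝ} (hσ : 0 < σ) : 0 < R1 κ σ := by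
  have hb : 0 < min 1 (2 * σ / Real.sqrt (max (κ 1) (4 * σ ^ 2))) := by
    apply lt_min one_pos
    apply div_pos (by positivity)
    exact Real.sqrt_pos.2 (lt_max_of_lt_right (by positivity))
  exact lt_of_lt_of_le hb (le_csInf (R1set_nonempty hκ hσ)
    (fun R hR => R1_mem_imp hκ hσ hR))

lemma R1_le {κ κ' : ℝ → ℝ} (hκ : memK κ) (hκ' : memK κ') {σ : ℝ} (hσ : 0 < σ)
    (hle : ∀ r, 0 < r → κ' r ≤ κ r) : R1 κ σ ≤ R1 κ' σ := by
  apply csInf_le_csInf ⟨0, fun x hx => le_trans (R0_nonneg κ) hx.1⟩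
    (R1set_nonempty hκ' hσ)
  intro R hR
  have hR0le : R0 κ ≤ R0 κ' := R0_le hκ hκ' hle
  refine ⟨le_trans hR0le hR.1, fun r hr hRr => ?_⟩
  have hkey := hR.2 r hr hRr
  have hR0' : 0 ≤ R0 κ' := R0_nonneg κ'
  have hRnn : 0 ≤ R := le_trans hR0' hR.1
  have h1 : 0 ≤ R - R0 κ' := by linarith [hR.1]
  have hprod : 0 ≤ R * (R - R0 κ') := mul_nonneg hRnn h1
  have hκ'pos : 0 < κ' r := by nlinarith
  have hκpos : 0 < κ r := lt_of_lt_of_le hκ'pos (hle r hr)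
  have h2 : R * (R - R0 κ') * κ' r ≤ R * (R - R0 κ') * κ r :=
    mul_le_mul_of_nonneg_left (hle r hr) hprod
  have h3 : R * (R - R0 κ') * κ r ≤ R * (R - R0 κ) * κ r := by
    nlinarith [mul_nonneg (mul_nonneg hRnn (sub_nonneg.2 hR0le)) hκpos.le]
  linarith

lemma Zconst_pos {κ : ℝ → ℝ} (hκ : memK κ) {σ : ℝ} (hσ : 0 < σ) :
    0 < Zconst κ σ := by
  have hR1 : 0 < R1 κ σ := R1_pos hκ hσ
  refine intervalIntegral.intervalIntegral_pos_of_pos_on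
    (hfun_intInt hκ σ le_rfl hR1.le) (fun x hx => ?_) hR1
  exact div_pos (PhiF_pos hκ σ hx.1) (phiF_pos κ σ x)

lemma Zconst_le {κ κ' : ℝ → ℝ} (hκ : memK κ) (hκ' : memK κ') {σ : ℝ} (hσ : 0 < σ)
    (hle : ∀ r, 0 < r → κ' r ≤ κ r) : Zconst κ σ ≤ Zconst κ' σ := by
  have hR1 : 0 < R1 κ σ := R1_pos hκ hσ
  have hR1le : R1 κ σ ≤ R1 κ' σ := R1_le hκ hκ' hσ hle
  have step1 : Zconst κ σ ≤ ∫ s in (0:ℝ)..(R1 κ σ), PhiF κ' σ s / phiF κ' σ s := by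
    refine intervalIntegral.integral_mono_on hR1.le
      (hfun_intInt hκ σ le_rfl hR1.le) (hfun_intInt hκ' σ le_rfl hR1.le)
      (fun x hx => hfun_le hκ hκ' hle hσ hx.1)
  have step2 : (∫ s in (0:ℝ)..(R1 κ σ), PhiF κ' σ s / phiF κ' σ s) ≤ Zconst κ' σ := by
    have hadd := intervalIntegral.integral_add_adjacent_intervals
      (hfun_intInt hκ' σ le_rfl hR1.le) (hfun_intInt hκ' σ hR1.le hR1le)
    have hnn : 0 ≤ ∫ s in (R1 κ σ)..(R1 κ' σ), PhiF κ' σ s / phiF κ' σ s :=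
      intervalIntegral.integral_nonneg hR1le (fun u hu =>
        div_nonneg (PhiF_nonneg σ (hR1.le.trans hu.1)) (phiF_pos κ' σ u).le)
    unfold Zconst
    linarith
  exact le_trans step1 step2

end Stmt4Aux

/-- monotonicity of `λ_{κ,σ̌}` and `C_{κ,σ̌}` in the profile `κ`. -/
theorem stmt4 (κ κ' : ℝ → ℝ) (σ : ℝ) (hκ : memK κ) (hκ' : memK κ') (hσ : 0 < σ)
    (hle : ∀ r, 0 < r → κ' r ≤ κ r) :
    lamConst κ' σ ≤ lamConst κ σ ∧ CConst κ' σ ≤ CConst κ σ := by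
  constructor
  · have hZ := Stmt4Aux.Zconst_pos hκ hσ
    have hZle := Stmt4Aux.Zconst_le hκ hκ' hσ hle
    exact div_le_div_of_nonneg_left (sq_nonneg σ) hZ hZle
  · have hR0le : R0 κ ≤ R0 κ' := Stmt4Aux.R0_le hκ hκ' hle
    have h1 : phiF κ' σ (R0 κ') ≤ phiF κ' σ (R0 κ) :=
      Stmt4Aux.phiF_antitone hκ' hσ (Stmt4Aux.R0_nonneg κ) hR0le
    have h2 : phiF κ' σ (R0 κ) ≤ phiF κ σ (R0 κ) :=
      Stmt4Aux.phiF_le hκ hκ' hle hσ (Stmt4Aux.R0_nonneg κ)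
    unfold CConst
    linarith
end
end

section
/- (Abstract turnpike estimate.) Let (M,ρ) be a metric space, T > 0, and Γ a set of functions from [0,T] to M. Let ν, ν̂ : Γ → Γ be maps, W : M × M → [0,∞) a function, v : (0,T] → (0,∞) a function, λ > 0 and ε ∈ [0,1). Assume: (H1) for all μ, μ̂ ∈ Γ, D⃗(ν̂[μ], ν̂[μ̂]) ≤ W(μ(0), μ̂(0)) + ε·D⃗(μ, μ̂); (H2) for all μ, μ̂ ∈ Γ with μ(0) = μ̂(0), D⃖(ν̂[μ], ν̂[μ̂]) ≤ ε·D⃖(μ, μ̂). Let μ ∈ Γ satisfy ν[μ] = μ, let μ̂ ∈ Γ satisfy ν̂[μ̂] = μ̂, and assume there exists μ̃ ∈ Γ with ν̂[μ̃] = μ̃ and μ̃(0) = μ(0). If moreover D⃗(μ̃, μ̂) < ∞ and D⃖(μ̃, μ) < ∞, then for every t ∈ (0,T): ρ(μ(t), μ̂(t)) ≤ (v(t)/(1−ε))·W(μ(0), μ̂(0)) + (e^{−λ(T−t)}/(1−ε))·D⃖(ν̂[μ], ν[μ]). -/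
open Set
open scoped ENNReal

/-!
Both μ and μ̂ are compared with the fixed point μ̃ of ν̂ that starts at μ(0).
Applied to μ̃ and μ̂, (H1) is a contraction up to the additive term W, so
D⃗(μ̃, μ̂) ≤ W / (1 - ε); (H2) applied to μ̃ and μ, together with the triangle
inequality through ν̂[μ], gives D⃖(μ̃, μ) ≤ D⃖(ν̂[μ], μ) / (1 - ε). Finiteness of
both distances is what allows the ε-terms to be absorbed. Evaluating the two
weighted distances at time t and using the triangle inequality through μ̃(t)
gives the estimate.
-/

/-- Both `D⃗` (weight `v⁻¹` on `(0,T]`) and `D⃖` (weight `e^{λ(T-s)}` on `[0,T)`)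
are of this form. -/
noncomputable def weightedSupDist {M : Type*} [PseudoMetricSpace M] (w : ℝ → ℝ) (S : Set ℝ)
    (μ μ' : ℝ → M) : ℝ≥0∞ :=
  ⨆ s ∈ S, ENNReal.ofReal (w s * dist (μ s) (μ' s))

lemma ENNReal.le_inv_one_sub_mul_of_le_add_mul {a b : ℝ≥0∞} {ε : ℝ} (hε0 : 0 ≤ ε)
    (hε1 : ε < 1) (ha : a ≠ ⊤) (h : a ≤ b + ENNReal.ofReal ε * a) :
    a ≤ ENNReal.ofReal (1 - ε)⁻¹ * b := by
  have hsplit : ENNReal.ofReal (1 - ε) * a + ENNReal.ofReal ε * a = a := by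
    rw [← add_mul, ← ENNReal.ofReal_add (by linarith) hε0]
    norm_num
  have hle : ENNReal.ofReal (1 - ε) * a ≤ b :=
    (ENNReal.add_le_add_iff_right (ENNReal.mul_ne_top ENNReal.ofReal_ne_top ha)).mp
      (hsplit.trans_le h)
  calc a = ENNReal.ofReal (1 - ε)⁻¹ * (ENNReal.ofReal (1 - ε) * a) := by
        rw [← mul_assoc, ← ENNReal.ofReal_mul (inv_nonneg.mpr (by linarith)),
          inv_mul_cancel₀ (by linarith), ENNReal.ofReal_one, one_mul]
    _ ≤ ENNReal.ofReal (1 - ε)⁻¹ * b := mul_le_mul_right hle _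

section weightedSupDist

variable {M : Type*} [PseudoMetricSpace M] {w : ℝ → ℝ} {S : Set ℝ}

lemma weightedSupDist_triangle (hw : ∀ s ∈ S, 0 ≤ w s) (μ μ' μ'' : ℝ → M) :
    weightedSupDist w S μ μ'' ≤ weightedSupDist w S μ μ' + weightedSupDist w S μ' μ'' := by
  refine iSup₂_le fun s hs => ?_
  calc ENNReal.ofReal (w s * dist (μ s) (μ'' s))
      ≤ ENNReal.ofReal (w s * dist (μ s) (μ' s) + w s * dist (μ' s) (μ'' s)) := by
        rw [← mul_add]
        exact ENNReal.ofReal_le_ofReal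
          (mul_le_mul_of_nonneg_left (dist_triangle _ _ _) (hw s hs))
    _ ≤ ENNReal.ofReal (w s * dist (μ s) (μ' s)) +
          ENNReal.ofReal (w s * dist (μ' s) (μ'' s)) :=
        ENNReal.ofReal_add_le
    _ ≤ weightedSupDist w S μ μ' + weightedSupDist w S μ' μ'' :=
        add_le_add (le_iSup₂_of_le s hs le_rfl) (le_iSup₂_of_le s hs le_rfl)

lemma ofReal_dist_le_inv_mul_weightedSupDist {s : ℝ} (hs : s ∈ S) (hws : 0 < w s)
    (μ μ' : ℝ → M) :
    ENNReal.ofReal (dist (μ s) (μ' s)) ≤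
      ENNReal.ofReal (w s)⁻¹ * weightedSupDist w S μ μ' := by
  calc ENNReal.ofReal (dist (μ s) (μ' s))
      = ENNReal.ofReal (w s)⁻¹ * ENNReal.ofReal (w s * dist (μ s) (μ' s)) := by
        rw [← ENNReal.ofReal_mul (inv_nonneg.mpr hws.le), inv_mul_cancel_left₀ hws.ne']
    _ ≤ ENNReal.ofReal (w s)⁻¹ * weightedSupDist w S μ μ' :=
        mul_le_mul_right
          (le_iSup₂ (f := fun s _ => ENNReal.ofReal (w s * dist (μ s) (μ' s))) s hs) _

lemma weightedSupDist_le_inv_one_sub_mul_of_le_mul (hw : ∀ s ∈ S, 0 ≤ w s) {ε : ℝ}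
    (hε0 : 0 ≤ ε) (hε1 : ε < 1) {x y z : ℝ → M} (hfin : weightedSupDist w S x y ≠ ⊤)
    (hz : weightedSupDist w S x z ≤ ENNReal.ofReal ε * weightedSupDist w S x y) :
    weightedSupDist w S x y ≤ ENNReal.ofReal (1 - ε)⁻¹ * weightedSupDist w S z y := by
  refine ENNReal.le_inv_one_sub_mul_of_le_add_mul hε0 hε1 hfin ?_
  calc weightedSupDist w S x y ≤ weightedSupDist w S x z + weightedSupDist w S z y :=
        weightedSupDist_triangle hw x z y
    _ ≤ weightedSupDist w S z y + ENNReal.ofReal ε * weightedSupDist w S x y := by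
        rw [add_comm]
        exact add_le_add_right hz _

end weightedSupDist

theorem stmt5_general {M : Type*} [MetricSpace M]
    (T : ℝ)
    (Γ : Set (ℝ → M))
    (ν νh : (ℝ → M) → (ℝ → M))
    (W : M → M → ℝ)
    (v : ℝ → ℝ) (hv : ∀ s ∈ Set.Ioc (0:ℝ) T, 0 < v s)
    (lam ε : ℝ) (hε0 : 0 ≤ ε) (hε1 : ε < 1)
    (Df Db : (ℝ → M) → (ℝ → M) → ℝ≥0∞)
    (hDf : ∀ μ μh : ℝ → M, Df μ μh =
      ⨆ s ∈ Set.Ioc (0:ℝ) T, ENNReal.ofReal ((v s)⁻¹ * dist (μ s) (μh s)))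
    (hDb : ∀ μ μh : ℝ → M, Db μ μh =
      ⨆ s ∈ Set.Ico (0:ℝ) T, ENNReal.ofReal (Real.exp (lam * (T - s)) * dist (μ s) (μh s)))
    (H1 : ∀ μ ∈ Γ, ∀ μh ∈ Γ,
      Df (νh μ) (νh μh) ≤ ENNReal.ofReal (W (μ 0) (μh 0)) + ENNReal.ofReal ε * Df μ μh)
    (H2 : ∀ μ ∈ Γ, ∀ μh ∈ Γ, μ 0 = μh 0 →
      Db (νh μ) (νh μh) ≤ ENNReal.ofReal ε * Db μ μh)
    (μ μh : ℝ → M) (hμ : μ ∈ Γ) (hμh : μh ∈ Γ)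
    (hfix : ν μ = μ) (hfixh : νh μh = μh)
    (μt : ℝ → M) (hμt : μt ∈ Γ) (hfixt : νh μt = μt) (hμt0 : μt 0 = μ 0)
    (hfin1 : Df μt μh < ⊤) (hfin2 : Db μt μ < ⊤) :
    ∀ t ∈ Set.Ioo (0:ℝ) T,
      ENNReal.ofReal (dist (μ t) (μh t)) ≤
        ENNReal.ofReal (v t / (1 - ε) * W (μ 0) (μh 0)) +
        ENNReal.ofReal (Real.exp (-lam * (T - t)) / (1 - ε)) * Db (νh μ) (ν μ) := by
  intro t ht
  have hDf' : Df = weightedSupDist (fun s => (v s)⁻¹) (Ioc 0 T) := funext₂ hDf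
  have hDb' : Db = weightedSupDist (fun s => Real.exp (lam * (T - s))) (Ico 0 T) :=
    funext₂ hDb
  have hforward : Df μt μh ≤ ENNReal.ofReal (1 - ε)⁻¹ * ENNReal.ofReal (W (μ 0) (μh 0)) := by
    refine ENNReal.le_inv_one_sub_mul_of_le_add_mul hε0 hε1 hfin1.ne ?_
    simpa only [hfixt, hfixh, hμt0] using H1 μt hμt μh hμh
  have hbackward : Db μt μ ≤ ENNReal.ofReal (1 - ε)⁻¹ * Db (νh μ) (ν μ) := by
    have hcontract := H2 μt hμt μ hμ hμt0
    rw [hfixt] at hcontract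
    rw [hDb'] at hcontract hfin2 ⊢
    rw [hfix]
    exact weightedSupDist_le_inv_one_sub_mul_of_le_mul (fun s _ => (Real.exp_pos _).le)
      hε0 hε1 hfin2.ne hcontract
  have hvt := hv t ⟨ht.1, ht.2.le⟩
  have hdist_forward :
      ENNReal.ofReal (dist (μt t) (μh t)) ≤ ENNReal.ofReal (v t) * Df μt μh := by
    simpa only [hDf', inv_inv] using ofReal_dist_le_inv_mul_weightedSupDist
      (w := fun s => (v s)⁻¹) (S := Ioc 0 T) ⟨ht.1, ht.2.le⟩ (inv_pos.mpr hvt) μt μh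
  have hdist_backward :
      ENNReal.ofReal (dist (μt t) (μ t)) ≤
        ENNReal.ofReal (Real.exp (-lam * (T - t))) * Db μt μ := by
    simpa only [hDb', ← Real.exp_neg, ← neg_mul] using ofReal_dist_le_inv_mul_weightedSupDist
      (w := fun s => Real.exp (lam * (T - s))) (S := Ico 0 T) ⟨ht.1.le, ht.2⟩
      (Real.exp_pos _) μt μ
  calc ENNReal.ofReal (dist (μ t) (μh t))
      ≤ ENNReal.ofReal (dist (μt t) (μ t)) + ENNReal.ofReal (dist (μt t) (μh t)) := by
        simpa only [← edist_dist] using edist_triangle_left _ _ _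
    _ ≤ ENNReal.ofReal (Real.exp (-lam * (T - t))) *
            (ENNReal.ofReal (1 - ε)⁻¹ * Db (νh μ) (ν μ)) +
          ENNReal.ofReal (v t) * (ENNReal.ofReal (1 - ε)⁻¹ * ENNReal.ofReal (W (μ 0) (μh 0))) :=
        add_le_add (hdist_backward.trans (mul_le_mul_right hbackward _))
          (hdist_forward.trans (mul_le_mul_right hforward _))
    _ = _ := by
        rw [add_comm, ← mul_assoc, ← mul_assoc, ← ENNReal.ofReal_mul hvt.le,
          ← ENNReal.ofReal_mul (Real.exp_pos _).le, ← ENNReal.ofReal_mul, div_eq_mul_inv,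
          div_eq_mul_inv]
        positivity

/-- Abstract turnpike estimate.  `Df` is the forward weighted distance
`D⃗(μ,μ̂) = sup_{0<s≤T} v(s)⁻¹ ρ(μ(s),μ̂(s))` and `Db` the backward weighted distance
`D⃖(μ,μ̂) = sup_{0≤s<T} e^{λ(T−s)} ρ(μ(s),μ̂(s))` (both with values in `[0,∞]`). -/
theorem stmt5 {M : Type*} [MetricSpace M]
    (T : ℝ) (hT : 0 < T)
    (Γ : Set (ℝ → M))
    (ν νh : (ℝ → M) → (ℝ → M))
    (hν : ∀ μ ∈ Γ, ν μ ∈ Γ) (hνh : ∀ μ ∈ Γ, νh μ ∈ Γ)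
    (W : M → M → ℝ) (hW : ∀ a b, 0 ≤ W a b)
    (v : ℝ → ℝ) (hv : ∀ s ∈ Set.Ioc (0:ℝ) T, 0 < v s)
    (lam ε : ℝ) (hlam : 0 < lam) (hε0 : 0 ≤ ε) (hε1 : ε < 1)
    (Df Db : (ℝ → M) → (ℝ → M) → ℝ≥0∞)
    (hDf : ∀ μ μh : ℝ → M, Df μ μh =
      ⨆ s ∈ Set.Ioc (0:ℝ) T, ENNReal.ofReal ((v s)⁻¹ * dist (μ s) (μh s)))
    (hDb : ∀ μ μh : ℝ → M, Db μ μh =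
      ⨆ s ∈ Set.Ico (0:ℝ) T, ENNReal.ofReal (Real.exp (lam * (T - s)) * dist (μ s) (μh s)))
    (H1 : ∀ μ ∈ Γ, ∀ μh ∈ Γ,
      Df (νh μ) (νh μh) ≤ ENNReal.ofReal (W (μ 0) (μh 0)) + ENNReal.ofReal ε * Df μ μh)
    (H2 : ∀ μ ∈ Γ, ∀ μh ∈ Γ, μ 0 = μh 0 →
      Db (νh μ) (νh μh) ≤ ENNReal.ofReal ε * Db μ μh)
    (μ μh : ℝ → M) (hμ : μ ∈ Γ) (hμh : μh ∈ Γ)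
    (hfix : ν μ = μ) (hfixh : νh μh = μh)
    (μt : ℝ → M) (hμt : μt ∈ Γ) (hfixt : νh μt = μt) (hμt0 : μt 0 = μ 0)
    (hfin1 : Df μt μh < ⊤) (hfin2 : Db μt μ < ⊤) :
    ∀ t ∈ Set.Ioo (0:ℝ) T,
      ENNReal.ofReal (dist (μ t) (μh t)) ≤
        ENNReal.ofReal (v t / (1 - ε) * W (μ 0) (μh 0)) +
        ENNReal.ofReal (Real.exp (-lam * (T - t)) / (1 - ε)) * Db (νh μ) (ν μ) :=
  stmt5_general T Γ ν νh W v hv lam ε hε0 hε1 Df Db hDf hDb H1 H2 μ μh hμ hμh hfix hfixh μt hμt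
    hfixt hμt0 hfin1 hfin2
end

section
/- Let d ∈ ℕ and ρ > 0. Let ℓ : ℝᵈ × ℝᵈ → ℝ be such that for every x ∈ ℝᵈ the map u ↦ ℓ(x,u) is twice continuously differentiable with ⟨∂²_{uu}ℓ(x,u)·v, v⟩ ≥ ρ·|v|² for all u, v ∈ ℝᵈ, and suppose for each (x,p) the function u ↦ ℓ(x,u) + (b(x)+u)·p has a unique minimizer w(x,p), where b : ℝᵈ → ℝᵈ. Then: (i) for every x, the map p ↦ w(x,p) is Lipschitz continuous with constant 1/ρ, i.e. |w(x,p) − w(x,p̂)| ≤ (1/ρ)|p − p̂| for all p, p̂ ∈ ℝᵈ; (ii) if in addition there is C_{ux} ≥ 0 such that |∂_u ℓ(x,u) − ∂_u ℓ(x̂,u)| ≤ C_{ux}·|x − x̂| for all x, x̂, u ∈ ℝᵈ, then |w(x,p) − w(x̂,p)| ≤ (C_{ux}/ρ)·|x − x̂| for all x, x̂, p ∈ ℝᵈ. -/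
/-!
The minimizer `w(x,p)` is characterised by the first-order condition `∂_u ℓ(x, w(x,p)) = -⟪p, ·⟫`.
The Hessian bound makes `∂_u ℓ(x, ·)` strongly monotone,
`ρ ‖u - v‖² ≤ (∂_u ℓ(x,u) - ∂_u ℓ(x,v)) (u - v)`, so `‖u - v‖ ≤ ‖∂_u ℓ(x,u) - ∂_u ℓ(x,v)‖ / ρ`.
Applied to two minimizers, the difference of derivatives is `⟪p' - p, ·⟫` when only `p` changes,
and `∂_u ℓ(x', ·) - ∂_u ℓ(x, ·)` at the same point when only `x` changes.
-/

open RealInnerProductSpace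

section StrongMonotonicity

variable {E : Type*} [NormedAddCommGroup E] [NormedSpace ℝ E] {ρ : ℝ} {f : E → ℝ}

/-- Mean value theorem for `t ↦ f' (v + t • (u - v)) (u - v)` on `[0, 1]`. -/
theorem mul_sq_norm_sub_le_fderiv_sub_fderiv (hf : ContDiff ℝ 2 f)
    (hconv : ∀ u v : E, ρ * ‖v‖ ^ 2 ≤ iteratedFDeriv ℝ 2 f u ![v, v]) (u v : E) :
    ρ * ‖u - v‖ ^ 2 ≤ fderiv ℝ f u (u - v) - fderiv ℝ f v (u - v) := by
  set e := u - v
  have hf' : Differentiable ℝ (fderiv ℝ f) :=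
    (hf.fderiv_right (by norm_num)).differentiable one_ne_zero
  have hφ (t : ℝ) : HasDerivAt (fun t : ℝ => fderiv ℝ f (v + t • e) e)
      (fderiv ℝ (fderiv ℝ f) (v + t • e) e e) t := by
    have hγ : HasDerivAt (fun t : ℝ => v + t • e) e t := by
      simpa using ((hasDerivAt_id t).smul_const e).const_add v
    exact (ContinuousLinearMap.apply ℝ ℝ e).hasFDerivAt.comp_hasDerivAt t
      ((hf' _).hasFDerivAt.comp_hasDerivAt t hγ)
  obtain ⟨c, -, hc⟩ := exists_hasDerivAt_eq_slope _ _ one_pos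
    (fun t _ => (hφ t).continuousAt.continuousWithinAt) (fun t _ => hφ t)
  have hρ := hconv (v + c • e) e
  rw [iteratedFDeriv_two_apply] at hρ
  simp only [Matrix.cons_val_zero, Matrix.cons_val_one, hc] at hρ
  simpa [e] using hρ

theorem norm_sub_le_norm_fderiv_sub_fderiv_div (hρ : 0 < ρ) (hf : ContDiff ℝ 2 f)
    (hconv : ∀ u v : E, ρ * ‖v‖ ^ 2 ≤ iteratedFDeriv ℝ 2 f u ![v, v]) (u v : E) :
    ‖u - v‖ ≤ ‖fderiv ℝ f u - fderiv ℝ f v‖ / ρ := by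
  have hmono : ρ * ‖u - v‖ ^ 2 ≤ ‖fderiv ℝ f u - fderiv ℝ f v‖ * ‖u - v‖ :=
    calc ρ * ‖u - v‖ ^ 2 ≤ (fderiv ℝ f u - fderiv ℝ f v) (u - v) :=
          mul_sq_norm_sub_le_fderiv_sub_fderiv hf hconv u v
      _ ≤ ‖(fderiv ℝ f u - fderiv ℝ f v) (u - v)‖ := le_abs_self _
      _ ≤ ‖fderiv ℝ f u - fderiv ℝ f v‖ * ‖u - v‖ := ContinuousLinearMap.le_opNorm _ _
  rw [le_div_iff₀ hρ]
  rcases (norm_nonneg (u - v)).eq_or_lt with h0 | h0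
  · rw [← h0, zero_mul]; exact norm_nonneg _
  · nlinarith

end StrongMonotonicity

theorem fderiv_eq_neg_innerSL_of_forall_le {E : Type*} [NormedAddCommGroup E]
    [InnerProductSpace ℝ E] {f : E → ℝ} (hf : Differentiable ℝ f) (b p m : E)
    (hm : ∀ u, f m + ⟪b + m, p⟫ ≤ f u + ⟪b + u, p⟫) :
    fderiv ℝ f m = -innerSL ℝ p := by
  have hderiv : HasFDerivAt (fun u => f u + innerSL ℝ p (b + u))
      (fderiv ℝ f m + innerSL ℝ p) m :=
    (hf m).hasFDerivAt.add <| by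
      simpa [Function.comp_def] using (innerSL ℝ p).hasFDerivAt.comp m ((hasFDerivAt_id m).const_add b)
  have hmin : IsLocalMin (fun u => f u + innerSL ℝ p (b + u)) m :=
    Filter.Eventually.of_forall fun u => by
      simpa [innerSL_apply_apply, real_inner_comm] using hm u
  exact eq_neg_of_add_eq_zero_left (hmin.hasFDerivAt_eq_zero hderiv)

theorem stmt7_general (d : ℕ) (ρ : ℝ) (hρ : 0 < ρ)
    (ℓ : EuclideanSpace ℝ (Fin d) → EuclideanSpace ℝ (Fin d) → ℝ)
    (b : EuclideanSpace ℝ (Fin d) → EuclideanSpace ℝ (Fin d))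
    (w : EuclideanSpace ℝ (Fin d) → EuclideanSpace ℝ (Fin d) → EuclideanSpace ℝ (Fin d))
    (hsmooth : ∀ x, ContDiff ℝ 2 (ℓ x))
    (hconv : ∀ x u v : EuclideanSpace ℝ (Fin d),
      ρ * ‖v‖ ^ 2 ≤ iteratedFDeriv ℝ 2 (ℓ x) u ![v, v])
    (hw : ∀ x p, ∀ u, ℓ x (w x p) + ⟪b x + w x p, p⟫ ≤ ℓ x u + ⟪b x + u, p⟫) :
    (∀ x p p', ‖w x p - w x p'‖ ≤ (1 / ρ) * ‖p - p'‖) ∧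
    (∀ Cux : ℝ, 0 ≤ Cux →
      (∀ x x' u : EuclideanSpace ℝ (Fin d),
        ‖fderiv ℝ (ℓ x) u - fderiv ℝ (ℓ x') u‖ ≤ Cux * ‖x - x'‖) →
      ∀ x x' p, ‖w x p - w x' p‖ ≤ (Cux / ρ) * ‖x - x'‖) := by
  have hfoc x p : fderiv ℝ (ℓ x) (w x p) = -innerSL ℝ p :=
    fderiv_eq_neg_innerSL_of_forall_le ((hsmooth x).differentiable two_ne_zero) _ _ _ (hw x p)
  have hlip x u v := norm_sub_le_norm_fderiv_sub_fderiv_div hρ (hsmooth x) (hconv x) u v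
  refine ⟨fun x p p' => ?_, fun Cux _ hder x x' p => ?_⟩
  · calc ‖w x p - w x p'‖ ≤ ‖-innerSL ℝ p + innerSL ℝ p'‖ / ρ := by
          simpa only [hfoc, sub_neg_eq_add] using hlip x (w x p) (w x p')
      _ = 1 / ρ * ‖p - p'‖ := by
          rw [neg_add_eq_sub, ← map_sub, innerSL_apply_norm, norm_sub_rev]; ring
  · calc ‖w x p - w x' p‖ ≤ ‖fderiv ℝ (ℓ x') (w x' p) - fderiv ℝ (ℓ x) (w x' p)‖ / ρ := by
          simpa only [hfoc] using hlip x (w x p) (w x' p)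
      _ ≤ Cux * ‖x' - x‖ / ρ := by gcongr; exact hder x' x _
      _ = Cux / ρ * ‖x - x'‖ := by rw [norm_sub_rev]; ring

/-- Lipschitz continuity of the pointwise minimizer `w(x,p)` of
`u ↦ ℓ(x,u) + (b(x)+u)·p`: it is `1/ρ`-Lipschitz in `p`, and `C_{ux}/ρ`-Lipschitz in `x`
when `∂_u ℓ` is `C_{ux}`-Lipschitz in `x`. -/
theorem stmt7 (d : ℕ) (ρ : ℝ) (hρ : 0 < ρ)
    (ℓ : EuclideanSpace ℝ (Fin d) → EuclideanSpace ℝ (Fin d) → ℝ)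
    (b : EuclideanSpace ℝ (Fin d) → EuclideanSpace ℝ (Fin d))
    (w : EuclideanSpace ℝ (Fin d) → EuclideanSpace ℝ (Fin d) → EuclideanSpace ℝ (Fin d))
    (hsmooth : ∀ x, ContDiff ℝ 2 (ℓ x))
    (hconv : ∀ x u v : EuclideanSpace ℝ (Fin d),
      ρ * ‖v‖ ^ 2 ≤ iteratedFDeriv ℝ 2 (ℓ x) u ![v, v])
    (hw : ∀ x p, ∀ u, ℓ x (w x p) + ⟪b x + w x p, p⟫ ≤ ℓ x u + ⟪b x + u, p⟫)
    (hwuniq : ∀ x p w',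
      (∀ u, ℓ x w' + ⟪b x + w', p⟫ ≤ ℓ x u + ⟪b x + u, p⟫) → w' = w x p) :
    (∀ x p p', ‖w x p - w x p'‖ ≤ (1 / ρ) * ‖p - p'‖) ∧
    (∀ Cux : ℝ, 0 ≤ Cux →
      (∀ x x' u : EuclideanSpace ℝ (Fin d),
        ‖fderiv ℝ (ℓ x) u - fderiv ℝ (ℓ x') u‖ ≤ Cux * ‖x - x'‖) →
      ∀ x x' p, ‖w x p - w x' p‖ ≤ (Cux / ρ) * ‖x - x'‖) :=
  stmt7_general d ρ hρ ℓ b w hsmooth hconv hw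
end

section
/- Let d ∈ ℕ, ρ > 0 and C ≥ 0. Let ℓ, ℓ̂ : ℝᵈ × ℝᵈ → ℝ both be twice continuously differentiable in the second variable with ⟨∂²_{uu}ℓ(x,u)·v, v⟩ ≥ ρ|v|² and ⟨∂²_{uu}ℓ̂(x,u)·v, v⟩ ≥ ρ|v|² for all x, u, v ∈ ℝᵈ, and let b, b̂ : ℝᵈ → ℝᵈ. Assume that for every x ∈ ℝᵈ the map u ↦ ℓ(x,u) − ℓ̂(x,u) is Lipschitz with constant C, i.e. |(ℓ − ℓ̂)(x,u) − (ℓ − ℓ̂)(x,û)| ≤ C|u − û| for all u, û. Let w(x,p) be the unique minimizer of u ↦ ℓ(x,u) + (b(x)+u)·p and ŵ(x,p) the unique minimizer of u ↦ ℓ̂(x,u) + (b̂(x)+u)·p. Then |w(x,p) − ŵ(x,p)| ≤ C/ρ for all x, p ∈ ℝᵈ. -/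
/-!
A Hessian bounded below by `ρ` gives quadratic growth `ρ/2 ‖u - m‖²` away from the minimizer `m`
of `f + ⟪·, p⟫` (Taylor along the segment from `m` to `u`). Adding the two growth inequalities,
each evaluated at the other problem's minimizer, the linear and drift terms cancel and leave
`ρ ‖w - ŵ‖² ≤ (ℓ - ℓ̂)(ŵ) - (ℓ - ℓ̂)(w) ≤ C ‖w - ŵ‖`.
-/

open RealInnerProductSpace

theorem add_deriv_add_half_le_of_le_deriv2 {φ φ' φ'' : ℝ → ℝ} {K : ℝ}
    (hφ : ∀ t, HasDerivAt φ (φ' t) t) (hφ' : ∀ t, HasDerivAt φ' (φ'' t) t)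
    (hK : ∀ t, K ≤ φ'' t) : φ 0 + φ' 0 + K / 2 ≤ φ 1 := by
  have hslope : ∀ t, 0 ≤ t → K * t ≤ φ' t - φ' 0 := by
    have hmono : Monotone (fun t => φ' t - K * t) := by
      refine monotone_of_hasDerivAt_nonneg
        (fun t => (hφ' t).sub ((hasDerivAt_id t).const_mul K)) fun t => ?_
      simpa using hK t
    intro t ht
    have := hmono ht
    simp only [mul_zero, sub_zero] at this
    linarith
  let g : ℝ → ℝ := fun t => φ t - φ' 0 * t - K / 2 * t ^ 2
  have hg : ∀ t, HasDerivAt g (φ' t - φ' 0 - K * t) t := fun t => by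
    refine (((hφ t).sub ((hasDerivAt_id t).const_mul (φ' 0))).sub
      ((hasDerivAt_pow 2 t).const_mul (K / 2))).congr_deriv ?_
    norm_num
    ring
  have hgmono : MonotoneOn g (Set.Ici 0) :=
    monotoneOn_of_hasDerivWithinAt_nonneg (convex_Ici 0)
      (fun t _ => (hg t).continuousAt.continuousWithinAt)
      (fun t _ => (hg t).hasDerivWithinAt)
      (fun t ht => by
        have := hslope t (interior_subset ht)
        linarith)
  have := hgmono Set.self_mem_Ici (Set.mem_Ici.mpr zero_le_one) zero_le_one
  simp only [g] at this
  norm_num at this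
  linarith

section InnerProductSpace

variable {E : Type*} [NormedAddCommGroup E] [InnerProductSpace ℝ E]

theorem add_fderiv_add_half_mul_norm_sq_le {f : E → ℝ} {ρ : ℝ} (hf : ContDiff ℝ 2 f)
    (hρ : ∀ u v : E, ρ * ‖v‖ ^ 2 ≤ iteratedFDeriv ℝ 2 f u ![v, v]) (m u : E) :
    f m + fderiv ℝ f m (u - m) + ρ / 2 * ‖u - m‖ ^ 2 ≤ f u := by
  set v := u - m
  have hline : ∀ t : ℝ, HasDerivAt (fun t : ℝ => m + t • v) v t := fun t => by
    simpa using ((hasDerivAt_id t).smul_const v).const_add m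
  have hf1 : Differentiable ℝ f := hf.differentiable (by norm_num)
  have hf2 : Differentiable ℝ (fderiv ℝ f) :=
    (hf.fderiv_right (m := 1) (by norm_num)).differentiable (by norm_num)
  have key := add_deriv_add_half_le_of_le_deriv2 (φ := fun t => f (m + t • v))
    (φ' := fun t => fderiv ℝ f (m + t • v) v)
    (φ'' := fun t => fderiv ℝ (fderiv ℝ f) (m + t • v) v v) (K := ρ * ‖v‖ ^ 2)
    (fun t => (hf1 _).hasFDerivAt.comp_hasDerivAt t (hline t))
    (fun t => by
      simpa using ((hf2 _).hasFDerivAt.comp_hasDerivAt t (hline t)).clm_apply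
        (hasDerivAt_const t v))
    (fun t => by simpa [iteratedFDeriv_two_apply] using hρ (m + t • v) v)
  simp only [zero_smul, add_zero, one_smul, v, add_sub_cancel] at key
  linarith

theorem add_inner_add_half_mul_norm_sq_le_of_forall_le {f : E → ℝ} {ρ : ℝ}
    (hf : ContDiff ℝ 2 f)
    (hρ : ∀ u v : E, ρ * ‖v‖ ^ 2 ≤ iteratedFDeriv ℝ 2 f u ![v, v]) {p m : E}
    (hm : ∀ u, f m + ⟪m, p⟫ ≤ f u + ⟪u, p⟫) (u : E) :
    f m + ⟪m, p⟫ + ρ / 2 * ‖u - m‖ ^ 2 ≤ f u + ⟪u, p⟫ := by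
  have hcrit : fderiv ℝ f m + innerSL ℝ p = 0 := by
    have hmin : IsLocalMin (fun z => f z + innerSL ℝ p z) m :=
      Filter.Eventually.of_forall fun z => by simpa [real_inner_comm] using hm z
    rw [← ((hf.differentiable (by norm_num) m).hasFDerivAt.add
      (innerSL ℝ p).hasFDerivAt).fderiv]
    exact hmin.fderiv_eq_zero
  have hgrad : fderiv ℝ f m (u - m) = ⟪m, p⟫ - ⟪u, p⟫ := by
    have := congrArg (fun L : E →L[ℝ] ℝ => L (u - m)) hcrit
    simp only [add_apply, innerSL_apply_apply, zero_apply, inner_sub_right] at this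
    rw [real_inner_comm p m, real_inner_comm p u]
    linarith
  linarith [add_fderiv_add_half_mul_norm_sq_le hf hρ m u]

end InnerProductSpace

theorem stmt8_general (d : ℕ) (ρ C : ℝ) (hρ : 0 < ρ) (hC : 0 ≤ C)
    (ℓ ℓh : EuclideanSpace ℝ (Fin d) → EuclideanSpace ℝ (Fin d) → ℝ)
    (b bh : EuclideanSpace ℝ (Fin d) → EuclideanSpace ℝ (Fin d))
    (hsmooth : ∀ x, ContDiff ℝ 2 (ℓ x)) (hsmooth' : ∀ x, ContDiff ℝ 2 (ℓh x))
    (hconv : ∀ x u v : EuclideanSpace ℝ (Fin d),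
      ρ * ‖v‖ ^ 2 ≤ iteratedFDeriv ℝ 2 (ℓ x) u ![v, v])
    (hconv' : ∀ x u v : EuclideanSpace ℝ (Fin d),
      ρ * ‖v‖ ^ 2 ≤ iteratedFDeriv ℝ 2 (ℓh x) u ![v, v])
    (hdiff : ∀ x u u' : EuclideanSpace ℝ (Fin d),
      |(ℓ x u - ℓh x u) - (ℓ x u' - ℓh x u')| ≤ C * ‖u - u'‖)
    (w wh : EuclideanSpace ℝ (Fin d) → EuclideanSpace ℝ (Fin d) → EuclideanSpace ℝ (Fin d))
    (hw : ∀ x p, ∀ u, ℓ x (w x p) + ⟪b x + w x p, p⟫ ≤ ℓ x u + ⟪b x + u, p⟫)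
    (hwh : ∀ x p, ∀ u, ℓh x (wh x p) + ⟪bh x + wh x p, p⟫ ≤ ℓh x u + ⟪bh x + u, p⟫) :
    ∀ x p : EuclideanSpace ℝ (Fin d), ‖w x p - wh x p‖ ≤ C / ρ := by
  intro x p
  have hmin : ∀ u, ℓ x (w x p) + ⟪w x p, p⟫ ≤ ℓ x u + ⟪u, p⟫ := fun u => by
    linarith [hw x p u, inner_add_left (𝕜 := ℝ) (b x) (w x p) p, inner_add_left (𝕜 := ℝ) (b x) u p]
  have hminh : ∀ u, ℓh x (wh x p) + ⟪wh x p, p⟫ ≤ ℓh x u + ⟪u, p⟫ := fun u => by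
    linarith [hwh x p u, inner_add_left (𝕜 := ℝ) (bh x) (wh x p) p,
      inner_add_left (𝕜 := ℝ) (bh x) u p]
  have hgrowth := add_inner_add_half_mul_norm_sq_le_of_forall_le (hsmooth x) (hconv x) hmin
    (wh x p)
  have hgrowthh := add_inner_add_half_mul_norm_sq_le_of_forall_le (hsmooth' x) (hconv' x)
    hminh (w x p)
  have hlip := (le_abs_self _).trans (hdiff x (wh x p) (w x p))
  rw [norm_sub_rev] at hgrowth hlip
  have hsq : ρ * ‖w x p - wh x p‖ ^ 2 ≤ C * ‖w x p - wh x p‖ := by linarith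
  rcases (norm_nonneg (w x p - wh x p)).eq_or_lt with hzero | hpos
  · rw [← hzero]
    positivity
  · rw [le_div_iff₀ hρ]
    nlinarith

/-- stability of the minimizers under a perturbation of the running cost whose
difference `ℓ − ℓ̂` is `C`-Lipschitz in the control variable: `|w(x,p) − ŵ(x,p)| ≤ C/ρ`. -/
theorem stmt8 (d : ℕ) (ρ C : ℝ) (hρ : 0 < ρ) (hC : 0 ≤ C)
    (ℓ ℓh : EuclideanSpace ℝ (Fin d) → EuclideanSpace ℝ (Fin d) → ℝ)
    (b bh : EuclideanSpace ℝ (Fin d) → EuclideanSpace ℝ (Fin d))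
    (hsmooth : ∀ x, ContDiff ℝ 2 (ℓ x)) (hsmooth' : ∀ x, ContDiff ℝ 2 (ℓh x))
    (hconv : ∀ x u v : EuclideanSpace ℝ (Fin d),
      ρ * ‖v‖ ^ 2 ≤ iteratedFDeriv ℝ 2 (ℓ x) u ![v, v])
    (hconv' : ∀ x u v : EuclideanSpace ℝ (Fin d),
      ρ * ‖v‖ ^ 2 ≤ iteratedFDeriv ℝ 2 (ℓh x) u ![v, v])
    (hdiff : ∀ x u u' : EuclideanSpace ℝ (Fin d),
      |(ℓ x u - ℓh x u) - (ℓ x u' - ℓh x u')| ≤ C * ‖u - u'‖)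
    (w wh : EuclideanSpace ℝ (Fin d) → EuclideanSpace ℝ (Fin d) → EuclideanSpace ℝ (Fin d))
    (hw : ∀ x p, ∀ u, ℓ x (w x p) + ⟪b x + w x p, p⟫ ≤ ℓ x u + ⟪b x + u, p⟫)
    (hwuniq : ∀ x p w',
      (∀ u, ℓ x w' + ⟪b x + w', p⟫ ≤ ℓ x u + ⟪b x + u, p⟫) → w' = w x p)
    (hwh : ∀ x p, ∀ u, ℓh x (wh x p) + ⟪bh x + wh x p, p⟫ ≤ ℓh x u + ⟪bh x + u, p⟫)
    (hwhuniq : ∀ x p w',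
      (∀ u, ℓh x w' + ⟪bh x + w', p⟫ ≤ ℓh x u + ⟪bh x + u, p⟫) → w' = wh x p) :
    ∀ x p : EuclideanSpace ℝ (Fin d), ‖w x p - wh x p‖ ≤ C / ρ :=
  stmt8_general d ρ C hρ hC ℓ ℓh b bh hsmooth hsmooth' hconv hconv' hdiff w wh hw hwh
end

section
/- Let d ∈ ℕ and 0 < σ₀ ≤ Σ. For all real d×d matrices A, Â satisfying 2σ₀²·I ⪯ A·Aᵀ ⪯ 2Σ²·I and 2σ₀²·I ⪯ Â·Âᵀ ⪯ 2Σ²·I, one has ‖(A·Aᵀ − σ₀²·I)^{1/2} − (Â·Âᵀ − σ₀²·I)^{1/2}‖_F ≤ (2Σ/σ₀)·‖A − Â‖_F, where M^{1/2} denotes the (unique) positive semidefinite square root of a positive semidefinite matrix M. In particular, if σ : ℝᵈ → ℝ^{d×d} is Lipschitz (with constant L in Frobenius norm) and satisfies 2σ₀²·I ⪯ σ(x)σ(x)ᵀ ⪯ 2Σ²·I for all x, then the map σ̄(x) = (σ(x)σ(x)ᵀ − σ₀²·I)^{1/2} is Lipschitz in Frobenius norm with constant (2Σ/σ₀)·L.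 -/
open Matrix

noncomputable section

/-- Frobenius norm of a real square matrix. -/
def frobNorm {d : ℕ} (A : Matrix (Fin d) (Fin d) ℝ) : ℝ :=
  Real.sqrt (∑ i, ∑ j, (A i j) ^ 2)

/-- Loewner order: `A ⪯ B` iff `B − A` is positive semidefinite. -/
def loewnerLE {d : ℕ} (A B : Matrix (Fin d) (Fin d) ℝ) : Prop := (B - A).PosSemidef

/-!
Put `D = B − B'` and `E = A − A'`. Since `B ⪰ 0` and `B² = AAᵀ − σ₀²I ⪰ σ₀²I`, the spectrum of `B`
lies in `[σ₀, ∞)`, i.e. `B ⪰ σ₀I`, and likewise `B' ⪰ σ₀I`. As `B² − B'² = BD + DB'`,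
`tr (D (B² − B'²)) = tr (DBD) + tr (DB'D) ≥ 2σ₀ ‖D‖²`, so Cauchy–Schwarz gives
`2σ₀ ‖D‖ ≤ ‖B² − B'²‖ = ‖AAᵀ − A'A'ᵀ‖`. Finally `AAᵀ − A'A'ᵀ = AEᵀ + EA'ᵀ`, and `AᵀA ⪯ 2Σ²I`
because `AᵀA` and `AAᵀ` have the same nonzero spectrum; this bounds each term by `√2 Σ ‖E‖`.
-/

open scoped MatrixOrder RealInnerProductSpace

section Frobenius

variable {d : ℕ}

-- Flattening turns `frobNorm` into a Euclidean norm, with inner product `tr (A Bᵀ)`.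
def frobVec (A : Matrix (Fin d) (Fin d) ℝ) : EuclideanSpace ℝ (Fin d × Fin d) :=
  WithLp.toLp 2 fun p => A p.1 p.2

lemma frobNorm_eq_norm_frobVec (A : Matrix (Fin d) (Fin d) ℝ) : frobNorm A = ‖frobVec A‖ := by
  simp [EuclideanSpace.norm_eq, frobNorm, frobVec, Fintype.sum_prod_type]

lemma inner_frobVec (A B : Matrix (Fin d) (Fin d) ℝ) :
    ⟪frobVec A, frobVec B⟫ = (A * Bᵀ).trace := by
  simp [frobVec, PiLp.inner_apply, Fintype.sum_prod_type, trace, mul_apply, mul_comm]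

lemma frobVec_add (A B : Matrix (Fin d) (Fin d) ℝ) : frobVec (A + B) = frobVec A + frobVec B :=
  rfl

lemma frobNorm_nonneg (A : Matrix (Fin d) (Fin d) ℝ) : 0 ≤ frobNorm A := Real.sqrt_nonneg _

lemma frobNorm_sq (A : Matrix (Fin d) (Fin d) ℝ) : frobNorm A ^ 2 = (A * Aᵀ).trace := by
  rw [frobNorm_eq_norm_frobVec, ← real_inner_self_eq_norm_sq, inner_frobVec]

lemma trace_mul_transpose_le (A B : Matrix (Fin d) (Fin d) ℝ) :
    (A * Bᵀ).trace ≤ frobNorm A * frobNorm B := by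
  rw [← inner_frobVec, frobNorm_eq_norm_frobVec, frobNorm_eq_norm_frobVec]
  exact real_inner_le_norm _ _

lemma frobNorm_add_le (A B : Matrix (Fin d) (Fin d) ℝ) :
    frobNorm (A + B) ≤ frobNorm A + frobNorm B := by
  simp only [frobNorm_eq_norm_frobVec, frobVec_add]
  exact norm_add_le _ _

lemma frobNorm_transpose (A : Matrix (Fin d) (Fin d) ℝ) : frobNorm Aᵀ = frobNorm A := by
  rw [frobNorm, frobNorm, Finset.sum_comm]
  rfl

end Frobenius

namespace Matrix

variable {n : Type*} [Fintype n]

lemma smul_one_le_of_sq_smul_one_le_mul_self [DecidableEq n] {B : Matrix n n ℝ} {a : ℝ}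
    (hB : 0 ≤ B) (h : a ^ 2 • (1 : Matrix n n ℝ) ≤ B * B) : a • (1 : Matrix n n ℝ) ≤ B := by
  have hsa : IsSelfAdjoint B := .of_nonneg hB
  rw [← Algebra.algebraMap_eq_smul_one] at h ⊢
  rw [← cfc_id' ℝ B, ← cfc_mul .., algebraMap_le_cfc_iff (fun x => x * x) (a ^ 2) B] at h
  rw [algebraMap_le_iff_le_spectrum]
  intro x hx
  nlinarith [h x hx, spectrum_nonneg_of_nonneg hB hx]

lemma transpose_mul_self_le_of_mul_transpose_le [DecidableEq n] {A : Matrix n n ℝ} {c : ℝ}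
    (hc : 0 ≤ c) (h : A * Aᵀ ≤ c • (1 : Matrix n n ℝ)) : Aᵀ * A ≤ c • (1 : Matrix n n ℝ) := by
  have hT : star A = Aᵀ := conjTranspose_eq_transpose_of_trivial A
  have hsa : IsSelfAdjoint (A * Aᵀ) := hT ▸ IsSelfAdjoint.mul_star_self A
  have hsa' : IsSelfAdjoint (Aᵀ * A) := hT ▸ IsSelfAdjoint.star_mul_self A
  rw [← Algebra.algebraMap_eq_smul_one, le_algebraMap_iff_spectrum_le] at h ⊢
  intro x hx
  rcases eq_or_ne x 0 with rfl | hx0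
  · exact hc
  · have hx' : x ∈ spectrum ℝ (A * Aᵀ) \ {0} := by
      rw [spectrum.nonzero_mul_comm]
      exact ⟨hx, hx0⟩
    exact h x hx'.1

lemma trace_conj_le_trace_conj {X Y : Matrix n n ℝ} (h : X ≤ Y) (E : Matrix n n ℝ) :
    (E * X * Eᵀ).trace ≤ (E * Y * Eᵀ).trace :=
  OrderHomClass.mono (tracePositiveLinearMap n ℝ ℝ) (star_right_conjugate_le_conjugate h E)

end Matrix

section Lipschitz

variable {d : ℕ}

lemma frobNorm_mul_le_of_mul_transpose_le {A : Matrix (Fin d) (Fin d) ℝ} {c : ℝ} (hc : 0 ≤ c)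
    (h : A * Aᵀ ≤ c • (1 : Matrix (Fin d) (Fin d) ℝ)) (E : Matrix (Fin d) (Fin d) ℝ) :
    frobNorm (E * A) ≤ √c * frobNorm E := by
  rw [← Real.sqrt_sq (frobNorm_nonneg E), ← Real.sqrt_mul hc, Real.le_sqrt (frobNorm_nonneg _)
    (by positivity), frobNorm_sq, frobNorm_sq]
  calc (E * A * (E * A)ᵀ).trace = (E * (A * Aᵀ) * Eᵀ).trace := by
        simp only [transpose_mul, Matrix.mul_assoc]
    _ ≤ (E * (c • 1) * Eᵀ).trace := trace_conj_le_trace_conj h E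
    _ = c * (E * Eᵀ).trace := by simp

lemma frobNorm_mul_transpose_sub_le {A A' : Matrix (Fin d) (Fin d) ℝ} {c : ℝ} (hc : 0 ≤ c)
    (hA : A * Aᵀ ≤ c • (1 : Matrix (Fin d) (Fin d) ℝ))
    (hA' : A' * A'ᵀ ≤ c • (1 : Matrix (Fin d) (Fin d) ℝ)) :
    frobNorm (A * Aᵀ - A' * A'ᵀ) ≤ 2 * √c * frobNorm (A - A') := by
  have hsplit : A * Aᵀ - A' * A'ᵀ = ((A - A') * Aᵀ)ᵀ + (A - A') * A'ᵀ := by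
    simp only [transpose_mul, transpose_transpose, transpose_sub, Matrix.sub_mul]
    abel
  have bound (X : Matrix (Fin d) (Fin d) ℝ) (hX : X * Xᵀ ≤ c • 1) :
      frobNorm ((A - A') * Xᵀ) ≤ √c * frobNorm (A - A') := by
    refine frobNorm_mul_le_of_mul_transpose_le hc ?_ _
    rw [transpose_transpose]
    exact transpose_mul_self_le_of_mul_transpose_le hc hX
  calc frobNorm (A * Aᵀ - A' * A'ᵀ)
      ≤ frobNorm ((A - A') * Aᵀ) + frobNorm ((A - A') * A'ᵀ) := by
        rw [hsplit, ← frobNorm_transpose ((A - A') * Aᵀ)]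
        exact frobNorm_add_le _ _
    _ ≤ 2 * √c * frobNorm (A - A') := by linarith [bound A hA, bound A' hA']

lemma two_mul_frobNorm_sub_le {B B' : Matrix (Fin d) (Fin d) ℝ} {a : ℝ}
    (hB : a • (1 : Matrix (Fin d) (Fin d) ℝ) ≤ B) (hB' : a • (1 : Matrix (Fin d) (Fin d) ℝ) ≤ B') :
    2 * a * frobNorm (B - B') ≤ frobNorm (B * B - B' * B') := by
  set D := B - B'
  have hsymm (X : Matrix (Fin d) (Fin d) ℝ) (hX : a • 1 ≤ X) : Xᵀ = X := by
    have : IsSelfAdjoint (X - a • 1 + a • 1) :=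
      (IsSelfAdjoint.of_nonneg (sub_nonneg.2 hX)).add (.smul (.all a) (.one _))
    rw [sub_add_cancel] at this
    exact (conjTranspose_eq_transpose_of_trivial X).symm.trans this
  have hD : Dᵀ = D := by simp only [D, transpose_sub, hsymm B hB, hsymm B' hB']
  have hconj (X : Matrix (Fin d) (Fin d) ℝ) (hX : a • 1 ≤ X) :
      a * frobNorm D ^ 2 ≤ (D * X * D).trace := by
    simpa [frobNorm_sq, hD] using trace_conj_le_trace_conj hX D
  have hcross : (D * (B * B - B' * B')).trace = (D * B * D).trace + (D * B' * D).trace := by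
    have : B * B - B' * B' = B * D + D * B' := by simp only [D]; noncomm_ring
    rw [this, Matrix.mul_add, trace_add, ← Matrix.mul_assoc, ← Matrix.mul_assoc,
      trace_mul_cycle D B' D]
  have hCS : (D * (B * B - B' * B')).trace ≤ frobNorm D * frobNorm (B * B - B' * B') := by
    have := trace_mul_transpose_le D (B * B - B' * B')
    rwa [transpose_sub, transpose_mul, transpose_mul, hsymm B hB, hsymm B' hB'] at this
  have key : 2 * a * frobNorm D ^ 2 ≤ frobNorm D * frobNorm (B * B - B' * B') := by
    linarith [hconj B hB, hconj B' hB']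
  rcases (frobNorm_nonneg D).eq_or_lt with h0 | hpos
  · rw [← h0, mul_zero]
    exact frobNorm_nonneg _
  · nlinarith

theorem frobNorm_sub_le_of_mul_self_eq {σ₀ Sg : ℝ} (hσ₀ : 0 < σ₀) (hSg : σ₀ ≤ Sg)
    {A A' B B' : Matrix (Fin d) (Fin d) ℝ}
    (hA : (2 * σ₀ ^ 2) • (1 : Matrix (Fin d) (Fin d) ℝ) ≤ A * Aᵀ)
    (hA_le : A * Aᵀ ≤ (2 * Sg ^ 2) • (1 : Matrix (Fin d) (Fin d) ℝ))
    (hA' : (2 * σ₀ ^ 2) • (1 : Matrix (Fin d) (Fin d) ℝ) ≤ A' * A'ᵀ)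
    (hA'_le : A' * A'ᵀ ≤ (2 * Sg ^ 2) • (1 : Matrix (Fin d) (Fin d) ℝ))
    (hB : 0 ≤ B) (hBB : B * B = A * Aᵀ - σ₀ ^ 2 • (1 : Matrix (Fin d) (Fin d) ℝ))
    (hB' : 0 ≤ B') (hBB' : B' * B' = A' * A'ᵀ - σ₀ ^ 2 • (1 : Matrix (Fin d) (Fin d) ℝ)) :
    frobNorm (B - B') ≤ (2 * Sg / σ₀) * frobNorm (A - A') := by
  have lower (X Y : Matrix (Fin d) (Fin d) ℝ) (hX : 0 ≤ X) (hY : (2 * σ₀ ^ 2) • 1 ≤ Y)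
      (hXX : X * X = Y - σ₀ ^ 2 • 1) : σ₀ • 1 ≤ X := by
    refine smul_one_le_of_sq_smul_one_le_mul_self hX ?_
    rw [hXX, le_sub_iff_add_le, ← add_smul]
    convert hY using 2
    ring
  have hsqrt : √(2 * Sg ^ 2) ≤ 2 * Sg := by
    rw [Real.sqrt_le_left (by linarith)]
    nlinarith
  have hBB_sub := two_mul_frobNorm_sub_le (lower B _ hB hA hBB) (lower B' _ hB' hA' hBB')
  rw [hBB, hBB', sub_sub_sub_cancel_right] at hBB_sub
  have hAA_sub := frobNorm_mul_transpose_sub_le (by positivity) hA_le hA'_le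
  rw [div_mul_eq_mul_div, le_div_iff₀ hσ₀]
  nlinarith [mul_le_mul_of_nonneg_right hsqrt (frobNorm_nonneg (A - A'))]

end Lipschitz

/-- Lipschitz continuity of the map `A ↦ (AAᵀ − σ₀²I)^{1/2}` (square roots
being the unique positive semidefinite square roots), on the set of matrices with
`2σ₀² I ⪯ AAᵀ ⪯ 2Σ² I`; and the consequent Lipschitz bound for `σ̄ = (σσᵀ − σ₀²I)^{1/2}`
when `σ` is Lipschitz in Frobenius norm. -/
theorem stmt9 (d : ℕ) (σ₀ Sg : ℝ) (hσ₀ : 0 < σ₀) (hSg : σ₀ ≤ Sg) :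
    (∀ A A' : Matrix (Fin d) (Fin d) ℝ,
      loewnerLE ((2 * σ₀ ^ 2) • (1 : Matrix (Fin d) (Fin d) ℝ)) (A * Aᵀ) →
      loewnerLE (A * Aᵀ) ((2 * Sg ^ 2) • (1 : Matrix (Fin d) (Fin d) ℝ)) →
      loewnerLE ((2 * σ₀ ^ 2) • (1 : Matrix (Fin d) (Fin d) ℝ)) (A' * A'ᵀ) →
      loewnerLE (A' * A'ᵀ) ((2 * Sg ^ 2) • (1 : Matrix (Fin d) (Fin d) ℝ)) →
      ∀ B B' : Matrix (Fin d) (Fin d) ℝ,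
        B.PosSemidef → B * B = A * Aᵀ - σ₀ ^ 2 • (1 : Matrix (Fin d) (Fin d) ℝ) →
        B'.PosSemidef → B' * B' = A' * A'ᵀ - σ₀ ^ 2 • (1 : Matrix (Fin d) (Fin d) ℝ) →
        frobNorm (B - B') ≤ (2 * Sg / σ₀) * frobNorm (A - A')) ∧
    (∀ (L : ℝ) (σ : EuclideanSpace ℝ (Fin d) → Matrix (Fin d) (Fin d) ℝ),
      0 ≤ L →
      (∀ x y, frobNorm (σ x - σ y) ≤ L * dist x y) →
      (∀ x, loewnerLE ((2 * σ₀ ^ 2) • (1 : Matrix (Fin d) (Fin d) ℝ)) (σ x * (σ x)ᵀ) ∧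
            loewnerLE (σ x * (σ x)ᵀ) ((2 * Sg ^ 2) • (1 : Matrix (Fin d) (Fin d) ℝ))) →
      ∀ x y, ∀ B B' : Matrix (Fin d) (Fin d) ℝ,
        B.PosSemidef → B * B = σ x * (σ x)ᵀ - σ₀ ^ 2 • (1 : Matrix (Fin d) (Fin d) ℝ) →
        B'.PosSemidef → B' * B' = σ y * (σ y)ᵀ - σ₀ ^ 2 • (1 : Matrix (Fin d) (Fin d) ℝ) →
        frobNorm (B - B') ≤ (2 * Sg / σ₀) * L * dist x y) := by
  refine ⟨fun A A' hA hA_le hA' hA'_le B B' hB hBB hB' hBB' =>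
    frobNorm_sub_le_of_mul_self_eq hσ₀ hSg hA hA_le hA' hA'_le hB.nonneg hBB hB'.nonneg hBB',
    fun L σ _ hσ hbd x y B B' hB hBB hB' hBB' => ?_⟩
  calc frobNorm (B - B')
      ≤ (2 * Sg / σ₀) * frobNorm (σ x - σ y) :=
        frobNorm_sub_le_of_mul_self_eq hσ₀ hSg (hbd x).1 (hbd x).2 (hbd y).1 (hbd y).2
          hB.nonneg hBB hB'.nonneg hBB'
    _ ≤ (2 * Sg / σ₀) * (L * dist x y) := by
        gcongr
        exacts [div_nonneg (by linarith) hσ₀.le, hσ x y]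
    _ = (2 * Sg / σ₀) * L * dist x y := by ring
end
end
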